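/- arXiv:2302.14361 — 4 statements merged into one kernel-verified Lean document; each statement's English description precedes it below -/
import Mathlib

section
/- Let K : ℂⁿ → ℂ be entire and suppose that for every multi-index β ∈ ℕⁿ and every real p ≥ max(1,|β|) there is c(β,p) > 0 with |∂^β K(z)| ≤ c(β,p)(1 + |Re z|)^{−p} e^{|Im z|} for all z ∈ ℂⁿ, and that for all multi-indices α, β: ∫_{ℝⁿ} x^α ∂^β K(x) dx = (−1)^{|α|} α! when α = β and = 0 when α ≠ β. Then for every v ∈ ℝⁿ and all multi-indices α, β: ∫_{ℝⁿ} (u + iv)^α ∂^β K(u + iv) du = (−1)^{|α|} α! when α = β, and = 0 when α ≠ β. -/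
open MeasureTheory

/-- First-order complex partial derivative in the `j`-th coordinate direction. -/
noncomputable def cpd {n : ℕ} (j : Fin n) (f : (Fin n → ℂ) → ℂ) : (Fin n → ℂ) → ℂ :=
  fun z => fderiv ℂ f z (Pi.single j 1)

/-- Iterated complex partial derivative `∂^β` for a multi-index `β : Fin n → ℕ`. -/
noncomputable def cmpd {n : ℕ} (α : Fin n → ℕ) (f : (Fin n → ℂ) → ℂ) : (Fin n → ℂ) → ℂ :=
  (List.finRange n).foldr (fun j g => (cpd j)^[α j] g) f

section Aux

open Filter

theorem cpd_analytic {n : ℕ} (j : Fin n) {f : (Fin n → ℂ) → ℂ}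
    (hf : AnalyticOnNhd ℂ f Set.univ) : AnalyticOnNhd ℂ (cpd j f) Set.univ := by
  intro z hz
  exact ((ContinuousLinearMap.apply ℂ ℂ (Pi.single j 1)).analyticAt _).comp (hf.fderiv z hz)

theorem cpd_iter_analytic {n : ℕ} (j : Fin n) (k : ℕ) {f : (Fin n → ℂ) → ℂ}
    (hf : AnalyticOnNhd ℂ f Set.univ) : AnalyticOnNhd ℂ ((cpd j)^[k] f) Set.univ := by
  induction k generalizing f with
  | zero => exact hf
  | succ k ih =>
    rw [Function.iterate_succ_apply]
    exact ih (cpd_analytic j hf)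

theorem cmpd_analytic {n : ℕ} (β : Fin n → ℕ) {f : (Fin n → ℂ) → ℂ}
    (hf : AnalyticOnNhd ℂ f Set.univ) : AnalyticOnNhd ℂ (cmpd β f) Set.univ := by
  unfold cmpd
  induction (List.finRange n) with
  | nil => exact hf
  | cons a l ih => exact cpd_iter_analytic a (β a) ih

theorem cmpd_differentiable {n : ℕ} (β : Fin n → ℕ) {f : (Fin n → ℂ) → ℂ}
    (hf : AnalyticOnNhd ℂ f Set.univ) : Differentiable ℂ (cmpd β f) :=
  fun z => ((cmpd_analytic β hf) z trivial).differentiableAt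

theorem diffG {n : ℕ} {K : (Fin n → ℂ) → ℂ} (hK : AnalyticOnNhd ℂ K Set.univ)
    (α β : Fin n → ℕ) :
    Differentiable ℂ (fun z : Fin n → ℂ => (∏ j, z j ^ α j) * cmpd β K z) := by
  have h0 : ∀ j : Fin n, Differentiable ℂ (fun z : Fin n → ℂ => z j) :=
    fun j => (ContinuousLinearMap.proj j : (Fin n → ℂ) →L[ℂ] ℂ).differentiable
  have h1 : ∀ j : Fin n, Differentiable ℂ (fun z : Fin n → ℂ => z j ^ α j) :=
    fun j => (h0 j).pow _
  have h2 : Differentiable ℂ (fun z : Fin n → ℂ => ∏ j, z j ^ α j) := by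
    classical
    induction (Finset.univ : Finset (Fin n)) using Finset.induction with
    | empty => simpa using differentiable_const (1 : ℂ)
    | @insert a s ha ih =>
      simp only [Finset.prod_insert ha]
      exact (h1 _).mul ih
  exact h2.mul (cmpd_differentiable β hK)

theorem boundG {n : ℕ} {K : (Fin n → ℂ) → ℂ}
    (hdecay : ∀ (β : Fin n → ℕ) (p : ℝ), max 1 ((∑ j, β j : ℕ) : ℝ) ≤ p →
      ∃ c : ℝ, 0 < c ∧ ∀ z : Fin n → ℂ,
        ‖cmpd β K z‖ ≤ c * (1 + ‖(fun j => (z j).re : Fin n → ℝ)‖) ^ (-p) *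
          Real.exp ‖(fun j => (z j).im : Fin n → ℝ)‖)
    (α β : Fin n → ℕ) (M : ℝ) (hM : 0 ≤ M) :
    ∃ c : ℝ, 0 < c ∧ ∀ z : Fin n → ℂ, ‖(fun j => (z j).im : Fin n → ℝ)‖ ≤ M →
      ‖(∏ j, z j ^ α j) * cmpd β K z‖ ≤
        c / (1 + ‖(fun j => (z j).re : Fin n → ℝ)‖) ^ (n + 2) := by
  set A : ℕ := ∑ j, α j with hA
  set p : ℝ := max 1 ((∑ j, β j : ℕ) : ℝ) + A + (n + 2) with hp
  have hple : max 1 ((∑ j, β j : ℕ) : ℝ) ≤ p := by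
    have : (0:ℝ) ≤ (A:ℝ) + (n+2) := by positivity
    linarith [this]
  obtain ⟨c₀, hc₀, hb⟩ := hdecay β p hple
  refine ⟨c₀ * (1 + M) ^ A * Real.exp M, by positivity, ?_⟩
  intro z hzim
  set R : ℝ := ‖(fun j => (z j).re : Fin n → ℝ)‖ with hR
  have hR0 : 0 ≤ R := norm_nonneg _
  have hR1 : (0:ℝ) < 1 + R := by linarith
  have hcoord : ∀ j, ‖z j‖ ≤ (1 + M) * (1 + R) := by
    intro j
    have h1 : |(z j).re| ≤ R := by
      have := norm_le_pi_norm (fun j => (z j).re : Fin n → ℝ) j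
      simpa using this
    have h2 : |(z j).im| ≤ M := by
      have := norm_le_pi_norm (fun j => (z j).im : Fin n → ℝ) j
      simp only [Real.norm_eq_abs] at this
      exact this.trans hzim
    calc ‖z j‖ ≤ |(z j).re| + |(z j).im| := Complex.norm_le_abs_re_add_abs_im _
      _ ≤ R + M := add_le_add h1 h2
      _ ≤ (1 + M) * (1 + R) := by nlinarith [hM, hR0]
  have hpoly : ‖∏ j, z j ^ α j‖ ≤ ((1 + M) * (1 + R)) ^ A := by
    rw [norm_prod]
    calc ∏ j, ‖z j ^ α j‖ ≤ ∏ j, ((1 + M) * (1 + R)) ^ α j := by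
          refine Finset.prod_le_prod (fun j _ => by positivity) (fun j _ => ?_)
          rw [norm_pow]
          exact pow_le_pow_left₀ (norm_nonneg _) (hcoord j) _
      _ = ((1 + M) * (1 + R)) ^ A := by
          rw [Finset.prod_pow_eq_pow_sum]
  have hKb : ‖cmpd β K z‖ ≤ c₀ * (1 + R) ^ (-p) * Real.exp M := by
    refine (hb z).trans ?_
    exact mul_le_mul_of_nonneg_left (Real.exp_le_exp.2 hzim) (by positivity)
  have hmain : ‖(∏ j, z j ^ α j) * cmpd β K z‖ ≤
      (c₀ * (1 + M) ^ A * Real.exp M) * ((1 + R) ^ (A : ℝ) * (1 + R) ^ (-p)) := by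
    rw [norm_mul]
    calc ‖∏ j, z j ^ α j‖ * ‖cmpd β K z‖
        ≤ ((1 + M) * (1 + R)) ^ A * (c₀ * (1 + R) ^ (-p) * Real.exp M) := by
          exact mul_le_mul hpoly hKb (norm_nonneg _) (by positivity)
      _ = (c₀ * (1 + M) ^ A * Real.exp M) * ((1 + R) ^ (A : ℝ) * (1 + R) ^ (-p)) := by
          rw [mul_pow, Real.rpow_natCast]; ring
  refine hmain.trans ?_
  rw [div_eq_mul_inv]
  refine mul_le_mul_of_nonneg_left ?_ (by positivity)
  have h1 : (1 + R) ^ (A : ℝ) * (1 + R) ^ (-p) = (1 + R) ^ ((A : ℝ) - p) := by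
    rw [← Real.rpow_add hR1]; ring_nf
  have h2 : ((A : ℝ) - p) ≤ -((n : ℝ) + 2) := by
    have h3 : (1:ℝ) ≤ max 1 ((∑ j, β j : ℕ) : ℝ) := le_max_left _ _
    have h5 : (A:ℝ) - p = -(max 1 ((∑ j, β j : ℕ) : ℝ)) - ((n:ℝ) + 2) := by
      rw [hp]; ring
    linarith
  have h4 : (1 + R) ^ ((A : ℝ) - p) ≤ (1 + R) ^ (-((n : ℝ) + 2)) :=
    Real.rpow_le_rpow_of_exponent_le (by linarith) h2
  rw [h1]
  refine h4.trans ?_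
  rw [Real.rpow_neg (by linarith)]
  have : ((1 + R) : ℝ) ^ ((n : ℝ) + 2) = (1 + R) ^ (n + 2) := by
    rw [← Real.rpow_natCast (1 + R) (n + 2)]; push_cast; ring_nf
  rw [this]

theorem re_shift {n : ℕ} (u w : Fin n → ℝ) :
    (fun j => (((u j : ℂ) + (w j : ℂ) * Complex.I) ).re : Fin n → ℝ) = u := by
  funext j; simp

theorem im_shift {n : ℕ} (u w : Fin n → ℝ) :
    (fun j => (((u j : ℂ) + (w j : ℂ) * Complex.I) ).im : Fin n → ℝ) = w := by
  funext j; simp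

theorem div_pow_le_rpow {c x : ℝ} (hc : 0 ≤ c) (hx : 0 ≤ x) (n : ℕ) :
    c / (1 + x) ^ (n + 2) = c * (1 + x) ^ (-((n : ℝ) + 2)) := by
  rw [Real.rpow_neg (by linarith), div_eq_mul_inv]
  congr 1
  rw [← Real.rpow_natCast (1 + x) (n + 2)]
  push_cast
  ring_nf

theorem integrableG {n : ℕ} {K : (Fin n → ℂ) → ℂ} (hK : AnalyticOnNhd ℂ K Set.univ)
    (hdecay : ∀ (β : Fin n → ℕ) (p : ℝ), max 1 ((∑ j, β j : ℕ) : ℝ) ≤ p →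
      ∃ c : ℝ, 0 < c ∧ ∀ z : Fin n → ℂ,
        ‖cmpd β K z‖ ≤ c * (1 + ‖(fun j => (z j).re : Fin n → ℝ)‖) ^ (-p) *
          Real.exp ‖(fun j => (z j).im : Fin n → ℝ)‖)
    (α β : Fin n → ℕ) (w : Fin n → ℝ) :
    Integrable (fun u : Fin n → ℝ =>
      (∏ j, ((u j : ℂ) + (w j : ℂ) * Complex.I) ^ α j) *
        cmpd β K (fun j => (u j : ℂ) + (w j : ℂ) * Complex.I)) := by
  obtain ⟨c, hc, hbd⟩ := boundG hdecay α β ‖w‖ (norm_nonneg w)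
  have hcont : Continuous fun u : Fin n → ℝ => (fun j => (u j : ℂ) + (w j : ℂ) * Complex.I) := by
    refine continuous_pi fun j => ?_
    exact (Complex.continuous_ofReal.comp (continuous_apply j)).add continuous_const
  have hGc : Continuous (fun z : Fin n → ℂ => (∏ j, z j ^ α j) * cmpd β K z) :=
    (diffG hK α β).continuous
  refine Integrable.mono'
    ((integrable_one_add_norm (μ := volume) (E := Fin n → ℝ) (r := (n : ℝ) + 2)
      (by simp [Module.finrank_fintype_fun_eq_card])).const_mul c)
    ((hGc.comp hcont).aestronglyMeasurable) ?_
  refine Filter.Eventually.of_forall fun u => ?_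
  have h := hbd (fun j => (u j : ℂ) + (w j : ℂ) * Complex.I) (by rw [im_shift])
  rw [re_shift] at h
  calc _ ≤ c / (1 + ‖u‖) ^ (n + 2) := h
    _ = c * (1 + ‖u‖) ^ (-((n : ℝ) + 2)) := div_pow_le_rpow hc.le (norm_nonneg u) n

theorem integrable_slice {g : ℂ → ℂ} (hg : Continuous g) {c t : ℝ}
    (hbd : ∀ x : ℝ, ‖g (↑x + ↑t * Complex.I)‖ ≤ c / (1 + |x|) ^ 2) :
    Integrable (fun x : ℝ => g (↑x + ↑t * Complex.I)) := by
  have hc : 0 ≤ c := by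
    have h1 := (norm_nonneg _).trans (hbd 0)
    simpa using h1
  refine Integrable.mono'
    ((integrable_one_add_norm (μ := volume) (E := ℝ) (r := 2) (by norm_num)).const_mul c)
    ?_ ?_
  · exact (hg.comp (by continuity)).aestronglyMeasurable
  refine Filter.Eventually.of_forall fun x => ?_
  calc ‖g (↑x + ↑t * Complex.I)‖ ≤ c / (1 + |x|) ^ 2 := hbd x
    _ = c * (1 + ‖x‖) ^ (-(2:ℝ)) := by
        rw [Real.rpow_neg (by positivity), Real.norm_eq_abs, div_eq_mul_inv]
        norm_num [Real.rpow_two]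

theorem shift1d {g : ℂ → ℂ} (hg : Differentiable ℂ g) {b c : ℝ}
    (hbd : ∀ x t : ℝ, |t| ≤ |b| → ‖g (↑x + ↑t * Complex.I)‖ ≤ c / (1 + |x|) ^ 2) :
    ∫ x : ℝ, g (↑x + ↑b * Complex.I) = ∫ x : ℝ, g ↑x := by
  have hc : 0 ≤ c := by
    have h1 := (norm_nonneg _).trans (hbd 0 0 (by simp))
    simpa using h1
  have hint_b : Integrable (fun x : ℝ => g (↑x + ↑b * Complex.I)) :=
    integrable_slice hg.continuous (fun x => hbd x b le_rfl)
  have hint_0 : Integrable (fun x : ℝ => g ↑x) := by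
    have h := integrable_slice hg.continuous (t := 0) (fun x => hbd x 0 (by simp))
    simpa using h
  have rect : ∀ R : ℝ,
      (∫ x : ℝ in (-R)..R, g (↑x + ↑b * Complex.I)) =
        (∫ x : ℝ in (-R)..R, g ↑x)
          + Complex.I • (∫ y : ℝ in (0:ℝ)..b, g (↑R + ↑y * Complex.I))
          - Complex.I • (∫ y : ℝ in (0:ℝ)..b, g (↑(-R) + ↑y * Complex.I)) := by
    intro R
    have H := Complex.integral_boundary_rect_eq_zero_of_differentiableOn g
      (↑(-R)) (↑R + ↑b * Complex.I) (hg.differentiableOn)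
    simp only [Complex.ofReal_re, Complex.add_re, Complex.mul_re, Complex.I_re,
      Complex.ofReal_im, Complex.add_im, Complex.mul_im, Complex.I_im,
      mul_zero, mul_one, zero_mul, sub_zero, add_zero, zero_add, Complex.ofReal_zero] at H
    simp only [smul_eq_mul] at H ⊢
    linear_combination -H
  have hA : Filter.Tendsto (fun R : ℝ => ∫ x : ℝ in (-R)..R, g ↑x) Filter.atTop
      (nhds (∫ x : ℝ, g ↑x)) :=
    intervalIntegral_tendsto_integral hint_0 tendsto_neg_atTop_atBot Filter.tendsto_id
  have hB : Filter.Tendsto (fun R : ℝ => ∫ x : ℝ in (-R)..R, g (↑x + ↑b * Complex.I)) Filter.atTop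
      (nhds (∫ x : ℝ, g (↑x + ↑b * Complex.I))) :=
    intervalIntegral_tendsto_integral hint_b tendsto_neg_atTop_atBot Filter.tendsto_id
  have hmem : ∀ y ∈ Set.uIoc (0:ℝ) b, |y| ≤ |b| := by
    intro y hy
    have h1 := hy.1
    have h2 := hy.2
    rcases le_total 0 b with hb0 | hb0
    · rw [abs_of_nonneg hb0]
      rw [abs_le]
      constructor
      · simp only [min_def] at h1 ⊢
        split_ifs at h1 <;> linarith
      · simp only [max_def] at h2 ⊢
        split_ifs at h2 <;> linarith
    · rw [abs_of_nonpos hb0, abs_le]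
      constructor
      · simp only [min_def] at h1 ⊢
        split_ifs at h1 <;> linarith
      · simp only [max_def] at h2 ⊢
        split_ifs at h2 <;> linarith
  have hVbound : ∀ (s : ℝ),
      ‖Complex.I • (∫ y : ℝ in (0:ℝ)..b, g (↑s + ↑y * Complex.I))‖ ≤ c / (1 + |s|) ^ 2 * |b| := by
    intro s
    rw [norm_smul, Complex.norm_I, one_mul]
    have hle : ∀ y ∈ Set.uIoc (0:ℝ) b, ‖g (↑s + ↑y * Complex.I)‖ ≤ c / (1 + |s|) ^ 2 :=
      fun y hy => hbd s y (hmem y hy)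
    have h2 := intervalIntegral.norm_integral_le_of_norm_le_const hle
    simpa using h2
  have htend0 : Filter.Tendsto (fun R : ℝ => c / (1 + |R|) ^ 2 * |b|) Filter.atTop (nhds 0) := by
    have h1 : Filter.Tendsto (fun R : ℝ => (1 + |R|) ^ 2) Filter.atTop Filter.atTop := by
      refine (tendsto_pow_atTop (by norm_num)).comp ?_
      exact Filter.tendsto_atTop_add_const_left _ 1 tendsto_abs_atTop_atTop
    have h2 : Filter.Tendsto (fun R : ℝ => c / (1 + |R|) ^ 2) Filter.atTop (nhds 0) :=
      Filter.Tendsto.div_atTop tendsto_const_nhds h1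
    simpa using h2.mul_const |b|
  have htendneg : Filter.Tendsto (fun R : ℝ => c / (1 + |(-R)|) ^ 2 * |b|) Filter.atTop (nhds 0) := by
    simpa [abs_neg] using htend0
  have hV1 : Filter.Tendsto
      (fun R : ℝ => Complex.I • (∫ y : ℝ in (0:ℝ)..b, g (↑R + ↑y * Complex.I)))
      Filter.atTop (nhds 0) :=
    squeeze_zero_norm (fun R => hVbound R) htend0
  have hV2 : Filter.Tendsto
      (fun R : ℝ => Complex.I • (∫ y : ℝ in (0:ℝ)..b, g (↑(-R) + ↑y * Complex.I)))
      Filter.atTop (nhds 0) :=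
    squeeze_zero_norm (fun R => hVbound (-R)) htendneg
  have hcomb : Filter.Tendsto (fun R : ℝ => (∫ x : ℝ in (-R)..R, g ↑x)
      + Complex.I • (∫ y : ℝ in (0:ℝ)..b, g (↑R + ↑y * Complex.I))
      - Complex.I • (∫ y : ℝ in (0:ℝ)..b, g (↑(-R) + ↑y * Complex.I))) Filter.atTop
      (nhds ((∫ x : ℝ, g ↑x) + 0 - 0)) := (hA.add hV1).sub hV2
  have := tendsto_nhds_unique (hcomb.congr (fun R => (rect R).symm)) hB
  rw [← this]
  simp

theorem split {m : ℕ} {K : (Fin (m+1) → ℂ) → ℂ}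
    (α β : Fin (m+1) → ℕ) (w : Fin (m+1) → ℝ) (a : Fin (m+1))
    (hFI : Integrable (fun u : Fin (m+1) → ℝ =>
      (∏ j, ((u j : ℂ) + (w j : ℂ) * Complex.I) ^ α j) *
        cmpd β K (fun j => (u j : ℂ) + (w j : ℂ) * Complex.I))) :
    (∫ u : Fin (m+1) → ℝ,
      (∏ j, ((u j : ℂ) + (w j : ℂ) * Complex.I) ^ α j) *
        cmpd β K (fun j => (u j : ℂ) + (w j : ℂ) * Complex.I)) =
    ∫ y : Fin m → ℝ, ∫ x : ℝ,
      (∏ j, (((Fin.insertNth (α := fun _ => ℝ) a x y j : ℝ) : ℂ) + (w j : ℂ) * Complex.I) ^ α j) *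
        cmpd β K (fun j => ((Fin.insertNth (α := fun _ => ℝ) a x y j : ℝ) : ℂ)
          + (w j : ℂ) * Complex.I) := by
  classical
  set F : (Fin (m+1) → ℝ) → ℂ := fun u =>
    (∏ j, ((u j : ℂ) + (w j : ℂ) * Complex.I) ^ α j) *
      cmpd β K (fun j => (u j : ℂ) + (w j : ℂ) * Complex.I) with hF
  set e := MeasurableEquiv.piFinSuccAbove (fun _ : Fin (m+1) => ℝ) a with he
  have hme : MeasurePreserving e := volume_preserving_piFinSuccAbove _ a
  have he_symm : ∀ p : ℝ × (Fin m → ℝ), e.symm p = a.insertNth p.1 p.2 := by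
    intro p
    simp [he, MeasurableEquiv.piFinSuccAbove, Fin.insertNthEquiv]
  have h0 : (∫ u, F u) = ∫ p : ℝ × (Fin m → ℝ), F (e.symm p) :=
    ((hme.symm e).integral_comp e.symm.measurableEmbedding F).symm
  have hI : Integrable (fun p : ℝ × (Fin m → ℝ) => F (e.symm p)) :=
    ((hme.symm e).integrable_comp_emb e.symm.measurableEmbedding).mpr hFI
  rw [h0]
  rw [Measure.volume_eq_prod] at hI ⊢
  rw [MeasureTheory.integral_prod _ hI]
  have hswap := MeasureTheory.integral_integral_swap
    (f := fun (x : ℝ) (y : Fin m → ℝ) => F (e.symm (x, y))) hI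
  rw [hswap]
  refine integral_congr_ae (Filter.Eventually.of_forall fun y => ?_)
  refine integral_congr_ae (Filter.Eventually.of_forall fun x => ?_)
  show F (e.symm (x, y)) = _
  rw [he_symm (x, y)]

theorem singleShift {m : ℕ} {K : (Fin (m+1) → ℂ) → ℂ} (hK : AnalyticOnNhd ℂ K Set.univ)
    (hdecay : ∀ (β : Fin (m+1) → ℕ) (p : ℝ), max 1 ((∑ j, β j : ℕ) : ℝ) ≤ p →
      ∃ c : ℝ, 0 < c ∧ ∀ z : Fin (m+1) → ℂ,
        ‖cmpd β K z‖ ≤ c * (1 + ‖(fun j => (z j).re : Fin (m+1) → ℝ)‖) ^ (-p) *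
          Real.exp ‖(fun j => (z j).im : Fin (m+1) → ℝ)‖)
    (α β : Fin (m+1) → ℕ) (v : Fin (m+1) → ℝ) (a : Fin (m+1)) :
    (∫ u : Fin (m+1) → ℝ,
      (∏ j, ((u j : ℂ) + (v j : ℂ) * Complex.I) ^ α j) *
        cmpd β K (fun j => (u j : ℂ) + (v j : ℂ) * Complex.I)) =
    ∫ u : Fin (m+1) → ℝ,
      (∏ j, ((u j : ℂ) + ((Function.update v a 0) j : ℂ) * Complex.I) ^ α j) *
        cmpd β K (fun j => (u j : ℂ) + ((Function.update v a 0) j : ℂ) * Complex.I) := by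
  classical
  obtain ⟨c, hc, hbd⟩ := boundG hdecay α β ‖v‖ (norm_nonneg v)
  have hGdiff := diffG hK α β
  rw [split α β v a (integrableG hK hdecay α β v),
      split α β (Function.update v a 0) a (integrableG hK hdecay α β (Function.update v a 0))]
  refine integral_congr_ae (Filter.Eventually.of_forall fun y => ?_)
  set cv : (k : Fin m) → ℂ := fun k => ((y k : ℝ) : ℂ) + (v (a.succAbove k) : ℂ) * Complex.I
    with hcv
  set gy : ℂ → ℂ := fun z =>
    (∏ j, (Fin.insertNth (α := fun _ => ℂ) a z cv j) ^ α j) *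
      cmpd β K (Fin.insertNth (α := fun _ => ℂ) a z cv) with hgy
  have hins : Differentiable ℂ (fun z : ℂ => Fin.insertNth (α := fun _ => ℂ) a z cv) := by
    refine differentiable_pi.mpr fun k => ?_
    refine Fin.succAboveCases a ?_ ?_ k
    · simp only [Fin.insertNth_apply_same]; exact differentiable_id
    · intro i; simp only [Fin.insertNth_apply_succAbove]; exact differentiable_const _
  have hgyd : Differentiable ℂ gy := hGdiff.comp hins
  have hbdy : ∀ x t : ℝ, |t| ≤ |v a| → ‖gy (↑x + ↑t * Complex.I)‖ ≤ c / (1 + |x|) ^ 2 := by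
    intro x t ht
    set wv : Fin (m+1) → ℂ := Fin.insertNth (α := fun _ => ℂ) a (↑x + ↑t * Complex.I) cv with hwv
    have him : ‖(fun j => (wv j).im : Fin (m+1) → ℝ)‖ ≤ ‖v‖ := by
      refine (pi_norm_le_iff_of_nonneg (norm_nonneg v)).mpr fun j => ?_
      refine Fin.succAboveCases a ?_ ?_ j
      · simp only [hwv, Fin.insertNth_apply_same, Real.norm_eq_abs]
        have h1 : (↑x + ↑t * Complex.I).im = t := by simp
        rw [h1]
        exact ht.trans (by simpa using norm_le_pi_norm v a)
      · intro i
        simp only [hwv, Fin.insertNth_apply_succAbove, hcv, Real.norm_eq_abs]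
        have h1 : (((y i : ℝ) : ℂ) + (v (a.succAbove i) : ℂ) * Complex.I).im
            = v (a.succAbove i) := by simp
        rw [h1]
        simpa using norm_le_pi_norm v (a.succAbove i)
    have hre : (fun j => (wv j).re : Fin (m+1) → ℝ) = Fin.insertNth (α := fun _ => ℝ) a x y := by
      funext j
      refine Fin.succAboveCases a ?_ ?_ j
      · simp [hwv]
      · intro i; simp [hwv, hcv]
    have h1 := hbd wv him
    rw [hre] at h1
    refine h1.trans ?_
    have hxle : |x| ≤ ‖Fin.insertNth (α := fun _ => ℝ) a x y‖ := by
      have := norm_le_pi_norm (Fin.insertNth (α := fun _ => ℝ) a x y) a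
      simpa using this
    have hb1 : (0:ℝ) < (1 + |x|) ^ 2 := by positivity
    have hb2 : (1 + |x|) ^ 2 ≤ (1 + ‖Fin.insertNth (α := fun _ => ℝ) a x y‖) ^ (m + 1 + 2) := by
      calc (1 + |x|) ^ 2 ≤ (1 + ‖Fin.insertNth (α := fun _ => ℝ) a x y‖) ^ 2 := by
            refine pow_le_pow_left₀ (by positivity) (by linarith) 2
        _ ≤ (1 + ‖Fin.insertNth (α := fun _ => ℝ) a x y‖) ^ (m + 1 + 2) := by
            refine pow_le_pow_right₀
              (by linarith [norm_nonneg (Fin.insertNth (α := fun _ => ℝ) a x y)]) (by omega)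
    exact div_le_div_of_nonneg_left hc.le hb1 hb2
  have hshift := shift1d hgyd (b := v a) hbdy
  have hp1 : ∀ x : ℝ,
      (∏ j, (((Fin.insertNth (α := fun _ => ℝ) a x y j : ℝ) : ℂ) + (v j : ℂ) * Complex.I) ^ α j) *
        cmpd β K (fun j => ((Fin.insertNth (α := fun _ => ℝ) a x y j : ℝ) : ℂ)
          + (v j : ℂ) * Complex.I)
      = gy (↑x + ↑(v a) * Complex.I) := by
    intro x
    have hvec : (fun j => ((Fin.insertNth (α := fun _ => ℝ) a x y j : ℝ) : ℂ)
          + (v j : ℂ) * Complex.I)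
        = Fin.insertNth (α := fun _ => ℂ) a (↑x + ↑(v a) * Complex.I) cv := by
      funext j
      refine Fin.succAboveCases a ?_ ?_ j
      · simp [hcv]
      · intro i; simp [hcv]
    simp only [hgy]
    rw [← hvec]
  have hp2 : ∀ x : ℝ,
      (∏ j, (((Fin.insertNth (α := fun _ => ℝ) a x y j : ℝ) : ℂ)
          + ((Function.update v a 0) j : ℂ) * Complex.I) ^ α j) *
        cmpd β K (fun j => ((Fin.insertNth (α := fun _ => ℝ) a x y j : ℝ) : ℂ)
          + ((Function.update v a 0) j : ℂ) * Complex.I)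
      = gy ↑x := by
    intro x
    have hvec : (fun j => ((Fin.insertNth (α := fun _ => ℝ) a x y j : ℝ) : ℂ)
          + ((Function.update v a 0) j : ℂ) * Complex.I)
        = Fin.insertNth (α := fun _ => ℂ) a (↑x) cv := by
      funext j
      refine Fin.succAboveCases a ?_ ?_ j
      · simp [hcv]
      · intro i
        simp [hcv, Function.update_of_ne (Fin.succAbove_ne a i)]
    simp only [hgy]
    rw [← hvec]
  calc (∫ x : ℝ,
        (∏ j, (((Fin.insertNth (α := fun _ => ℝ) a x y j : ℝ) : ℂ) + (v j : ℂ) * Complex.I) ^ α j) *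
          cmpd β K (fun j => ((Fin.insertNth (α := fun _ => ℝ) a x y j : ℝ) : ℂ)
            + (v j : ℂ) * Complex.I))
      = ∫ x : ℝ, gy (↑x + ↑(v a) * Complex.I) :=
        integral_congr_ae (Filter.Eventually.of_forall fun x => hp1 x)
    _ = ∫ x : ℝ, gy ↑x := hshift
    _ = _ := (integral_congr_ae (Filter.Eventually.of_forall fun x => (hp2 x).symm))

theorem shiftAll {n : ℕ} {K : (Fin n → ℂ) → ℂ} (hK : AnalyticOnNhd ℂ K Set.univ)
    (hdecay : ∀ (β : Fin n → ℕ) (p : ℝ), max 1 ((∑ j, β j : ℕ) : ℝ) ≤ p →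
      ∃ c : ℝ, 0 < c ∧ ∀ z : Fin n → ℂ,
        ‖cmpd β K z‖ ≤ c * (1 + ‖(fun j => (z j).re : Fin n → ℝ)‖) ^ (-p) *
          Real.exp ‖(fun j => (z j).im : Fin n → ℝ)‖)
    (α β : Fin n → ℕ) (v : Fin n → ℝ) :
    (∫ u : Fin n → ℝ,
      (∏ j, ((u j : ℂ) + (v j : ℂ) * Complex.I) ^ α j) *
        cmpd β K (fun j => (u j : ℂ) + (v j : ℂ) * Complex.I)) =
    ∫ x : Fin n → ℝ, (∏ j, (x j : ℂ) ^ α j) * cmpd β K (fun j => (x j : ℂ)) := by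
  classical
  have key : ∀ s : Finset (Fin n), ∀ w : Fin n → ℝ, (∀ j, j ∉ s → w j = 0) →
      (∫ u : Fin n → ℝ,
        (∏ j, ((u j : ℂ) + (w j : ℂ) * Complex.I) ^ α j) *
          cmpd β K (fun j => (u j : ℂ) + (w j : ℂ) * Complex.I)) =
      ∫ x : Fin n → ℝ, (∏ j, (x j : ℂ) ^ α j) * cmpd β K (fun j => (x j : ℂ)) := by
    intro s
    induction s using Finset.induction with
    | empty =>
      intro w hw
      have hw0 : ∀ j, w j = 0 := fun j => hw j (Finset.notMem_empty j)
      refine integral_congr_ae (Filter.Eventually.of_forall fun u => ?_)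
      simp [hw0]
    | @insert a s ha ih =>
      intro w hw
      rcases n with - | m
      · exact a.elim0
      rw [singleShift hK hdecay α β w a]
      refine ih (Function.update w a 0) fun j hj => ?_
      rcases eq_or_ne j a with rfl | hne
      · simp
      · rw [Function.update_of_ne hne]
        exact hw j (by simp [hj, hne])
  exact key Finset.univ v (by simp)

end Aux

/-- complex translation of the moment identities. -/
theorem statement5 (n : ℕ) (K : (Fin n → ℂ) → ℂ)
    (hK : AnalyticOnNhd ℂ K Set.univ)
    (hdecay : ∀ (β : Fin n → ℕ) (p : ℝ), max 1 ((∑ j, β j : ℕ) : ℝ) ≤ p →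
      ∃ c : ℝ, 0 < c ∧ ∀ z : Fin n → ℂ,
        ‖cmpd β K z‖ ≤ c * (1 + ‖(fun j => (z j).re : Fin n → ℝ)‖) ^ (-p) *
          Real.exp ‖(fun j => (z j).im : Fin n → ℝ)‖)
    (hmom : ∀ α β : Fin n → ℕ,
      (∫ x : Fin n → ℝ, (∏ j, (x j : ℂ) ^ α j) * cmpd β K (fun j => (x j : ℂ))) =
        if α = β then
          (-1 : ℂ) ^ (∑ j, α j) * ((∏ j, Nat.factorial (α j) : ℕ) : ℂ)
        else 0) :
    ∀ (v : Fin n → ℝ) (α β : Fin n → ℕ),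
      Integrable (fun u : Fin n → ℝ =>
        (∏ j, ((u j : ℂ) + (v j : ℂ) * Complex.I) ^ α j) *
          cmpd β K (fun j => (u j : ℂ) + (v j : ℂ) * Complex.I)) ∧
      (∫ u : Fin n → ℝ,
          (∏ j, ((u j : ℂ) + (v j : ℂ) * Complex.I) ^ α j) *
            cmpd β K (fun j => (u j : ℂ) + (v j : ℂ) * Complex.I)) =
        if α = β then
          (-1 : ℂ) ^ (∑ j, α j) * ((∏ j, Nat.factorial (α j) : ℕ) : ℂ)
        else 0 := by
  intro v α β
  exact ⟨integrableG hK hdecay α β v, (shiftAll hK hdecay α β v).trans (hmom α β)⟩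
end

section
/- Let k ∈ ℕ, δ > 0, let ϖ be a modulus of continuity on (0,δ], and let f : ℝⁿ → ℝ be of class C^k such that [∂^α f]_ϖ ≤ L for every multi-index α with |α| = k and some L ≥ 0. Then there is a constant c(n,k) > 0 such that for all x, y ∈ ℝⁿ with 0 < |y| ≤ δ: |f(x+y) − Σ_{|β|≤k} ∂^β f(x) y^β/β!| ≤ c(n,k) · L · ϖ(|y|) · |y|^k. -/
/-!
Induction on `k`, for the Taylor remainder `R_k f x y = f (x + y) - ∑_{m ≤ k} T_m f x y`, where
`T_m` is the homogeneous Taylor part of degree `m`. What the induction proves is the oscillation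
form: if every `∂^α f` with `|α| = k` oscillates by at most `M` over displacements of norm `≤ r`,
then `‖R_k f x y‖ ≤ n ^ k * M * ‖y‖ ^ k` whenever `‖y‖ ≤ r`. The modulus enters only at the end,
through `r = ‖y‖` and `M = L ϖ ‖y‖`, by monotonicity of `ϖ`.

For the step, `t ↦ R_{k+1} f x (t • y)` vanishes at `0` and has derivative
`∑ j, y j • R_k (∂_j f) x (t • y)`: this rests on the Euler-type identity
`∑ j, y j • T_m (∂_j f) x y = (m + 1) • T_{m+1} f x y`, which needs the symmetry of second
derivatives to identify `∂^γ ∂_j f` with `∂^(γ + e_j) f`. The induction hypothesis for each `∂_j f`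
bounds this derivative by `n ^ (k+1) * M * ‖y‖ ^ (k+1)` on `[0, 1]`, and the mean value inequality
concludes.
-/

/-- First-order partial derivative in the `j`-th coordinate direction. -/
noncomputable def pd {n : ℕ} {E : Type*} [NormedAddCommGroup E] [NormedSpace ℝ E]
    (j : Fin n) (f : (Fin n → ℝ) → E) : (Fin n → ℝ) → E :=
  fun x => fderiv ℝ f x (Pi.single j 1)

/-- Iterated partial derivative `∂^α` for a multi-index `α : Fin n → ℕ`. -/
noncomputable def mpd {n : ℕ} {E : Type*} [NormedAddCommGroup E] [NormedSpace ℝ E]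
    (α : Fin n → ℕ) (f : (Fin n → ℝ) → E) : (Fin n → ℝ) → E :=
  (List.finRange n).foldr (fun j g => (pd j)^[α j] g) f

open Finset
open scoped Nat

variable {n : ℕ} {E : Type*} [NormedAddCommGroup E] [NormedSpace ℝ E]

theorem contDiff_pd {m : ℕ} (j : Fin n) {f : (Fin n → ℝ) → E}
    (hf : ContDiff ℝ (m + 1 : ℕ) f) : ContDiff ℝ m (pd j f) :=
  (hf.fderiv_right (by norm_cast)).clm_apply contDiff_const

theorem pd_comm {f : (Fin n → ℝ) → E} (hf : ContDiff ℝ 2 f) (i j : Fin n) :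
    pd i (pd j f) = pd j (pd i f) := by
  have hdiff : Differentiable ℝ (fderiv ℝ f) :=
    (hf.fderiv_right one_add_one_eq_two.le).differentiable one_ne_zero
  have fderiv_pd (l : Fin n) (x v : Fin n → ℝ) :
      fderiv ℝ (pd l f) x v = fderiv ℝ (fderiv ℝ f) x v (Pi.single l 1) := by
    rw [show pd l f = fun y => fderiv ℝ f y (Pi.single l 1) from rfl,
      fderiv_clm_apply (hdiff x) (differentiableAt_const _)]
    simp
  funext x
  simp only [pd, fderiv_pd]
  exact hf.contDiffAt.isSymmSndFDerivAt (by simp) _ _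

theorem contDiff_iterate_pd {m s : ℕ} (j : Fin n) {f : (Fin n → ℝ) → E}
    (hf : ContDiff ℝ (m + s : ℕ) f) : ContDiff ℝ m ((pd j)^[s] f) := by
  induction s generalizing f with
  | zero => simpa using hf
  | succ s ih => exact ih (contDiff_pd j (by rwa [← add_assoc] at hf))

theorem pd_iterate_pd_comm {s : ℕ} (i j : Fin n) {f : (Fin n → ℝ) → E}
    (hf : ContDiff ℝ (s + 1 : ℕ) f) : pd j ((pd i)^[s] f) = (pd i)^[s] (pd j f) := by
  induction s generalizing f with
  | zero => rfl
  | succ s ih =>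
    rw [Function.iterate_succ_apply, Function.iterate_succ_apply, ih (contDiff_pd i hf),
      pd_comm (hf.of_le (by norm_cast; omega)) j i]

noncomputable def mpdList (l : List (Fin n)) (α : Fin n → ℕ) (f : (Fin n → ℝ) → E) :
    (Fin n → ℝ) → E :=
  l.foldr (fun j g => (pd j)^[α j] g) f

theorem mpdList_cons (i : Fin n) (l : List (Fin n)) (α : Fin n → ℕ) (f : (Fin n → ℝ) → E) :
    mpdList (i :: l) α f = (pd i)^[α i] (mpdList l α f) := rfl

theorem mpdList_congr {l : List (Fin n)} {α β : Fin n → ℕ} (h : ∀ i ∈ l, α i = β i)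
    (f : (Fin n → ℝ) → E) : mpdList l α f = mpdList l β f := by
  induction l with
  | nil => rfl
  | cons i l ih =>
    rw [mpdList_cons, mpdList_cons, ih fun i' hi' => h i' (List.mem_cons_of_mem _ hi'),
      h i List.mem_cons_self]

theorem contDiff_mpdList {m : ℕ} (l : List (Fin n)) (α : Fin n → ℕ) {f : (Fin n → ℝ) → E}
    (hf : ContDiff ℝ (m + (l.map α).sum : ℕ) f) : ContDiff ℝ m (mpdList l α f) := by
  induction l generalizing m with
  | nil => simpa [mpdList] using hf
  | cons i l ih =>
    rw [List.map_cons, List.sum_cons] at hf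
    exact contDiff_iterate_pd i (ih (hf.of_le (by norm_cast; omega)))

theorem pd_mpdList_comm (j : Fin n) (l : List (Fin n)) (α : Fin n → ℕ) {f : (Fin n → ℝ) → E}
    (hf : ContDiff ℝ ((l.map α).sum + 1 : ℕ) f) :
    pd j (mpdList l α f) = mpdList l α (pd j f) := by
  induction l with
  | nil => rfl
  | cons i l ih =>
    rw [List.map_cons, List.sum_cons] at hf
    have hl : ContDiff ℝ (α i + 1 + (l.map α).sum : ℕ) f := hf.of_le (by norm_cast; omega)
    rw [mpdList_cons, mpdList_cons, pd_iterate_pd_comm i j (contDiff_mpdList l α hl),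
      ih (hf.of_le (by norm_cast; omega))]

theorem mpdList_pd {l : List (Fin n)} (hl : l.Nodup) {j : Fin n} (hj : j ∈ l) (α : Fin n → ℕ)
    {f : (Fin n → ℝ) → E} (hf : ContDiff ℝ ((l.map α).sum + 1 : ℕ) f) :
    mpdList l α (pd j f) = mpdList l (α + Pi.single j 1) f := by
  induction l with
  | nil => simp at hj
  | cons i l ih =>
    rw [List.nodup_cons] at hl
    rw [List.map_cons, List.sum_cons] at hf
    have hl' : ContDiff ℝ ((l.map α).sum + 1 : ℕ) f := hf.of_le (by norm_cast; omega)
    rw [mpdList_cons, mpdList_cons]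
    by_cases hij : i = j
    · subst hij
      have hoff : ∀ i' ∈ l, α i' = (α + Pi.single i 1 : Fin n → ℕ) i' := fun i' hi' => by
        simp [ne_of_mem_of_not_mem hi' hl.1]
      rw [← pd_mpdList_comm i l α hl', ← Function.iterate_succ_apply (pd i),
        mpdList_congr hoff]
      simp
    · have hj' : j ∈ l := (List.mem_cons.mp hj).resolve_left (Ne.symm hij)
      rw [ih hl.2 hj' hl']
      simp [hij]

theorem mpd_pd (j : Fin n) (α : Fin n → ℕ) {f : (Fin n → ℝ) → E}
    (hf : ContDiff ℝ (∑ i, α i + 1 : ℕ) f) : mpd α (pd j f) = mpd (α + Pi.single j 1) f := by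
  refine mpdList_pd (List.nodup_finRange n) (List.mem_finRange j) α ?_
  rwa [← Fin.sum_univ_def]

theorem mpd_zero (f : (Fin n → ℝ) → E) : mpd 0 f = f := by
  change (List.finRange n).foldr _ f = f
  induction List.finRange n <;> simp_all

theorem sum_add_pi_single_one (γ : Fin n → ℕ) (j : Fin n) :
    ∑ i, (γ + Pi.single j 1 : Fin n → ℕ) i = ∑ i, γ i + 1 := by
  simp [sum_add_distrib]

theorem prod_pow_div_factorial_add_single (γ : Fin n → ℕ) (j : Fin n) (y : Fin n → ℝ) :
    ((γ j : ℝ) + 1) * ∏ i, y i ^ (γ + Pi.single j 1 : Fin n → ℕ) i /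
        ((γ + Pi.single j 1 : Fin n → ℕ) i)! =
      y j * ∏ i, y i ^ γ i / (γ i)! := by
  classical
  have hoff : ∀ i ∈ ({j}ᶜ : Finset (Fin n)), y i ^ (γ + Pi.single j 1 : Fin n → ℕ) i /
      ((γ + Pi.single j 1 : Fin n → ℕ) i)! = y i ^ γ i / (γ i)! := by
    intro i hi
    simp [show i ≠ j by simpa using hi]
  rw [Fintype.prod_eq_mul_prod_compl j, Fintype.prod_eq_mul_prod_compl j, prod_congr rfl hoff]
  simp only [Pi.add_apply, Pi.single_eq_same, Nat.factorial_succ, pow_succ]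
  push_cast
  field_simp

theorem sum_smul_sum_antidiagonalTuple_add_single (G : (Fin n → ℕ) → E) (y : Fin n → ℝ)
    (m : ℕ) :
    ∑ j, y j • ∑ γ ∈ Nat.antidiagonalTuple n m,
        (∏ i, y i ^ γ i / (γ i)!) • G (γ + Pi.single j 1) =
      ((m : ℝ) + 1) • ∑ α ∈ Nat.antidiagonalTuple n (m + 1),
        (∏ i, y i ^ α i / (α i)!) • G α := by
  have hweight : ∀ α ∈ Nat.antidiagonalTuple n (m + 1), ((m : ℝ) + 1) = ∑ j, (α j : ℝ) := by
    intro α hα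
    rw [Nat.mem_antidiagonalTuple] at hα
    exact_mod_cast hα.symm
  symm
  calc _ = ∑ α ∈ Nat.antidiagonalTuple n (m + 1), ∑ j,
        (α j : ℝ) • (∏ i, y i ^ α i / (α i)!) • G α := by
        rw [smul_sum]
        exact sum_congr rfl fun α hα => by rw [hweight α hα, sum_smul]
    _ = ∑ j, ∑ α ∈ Nat.antidiagonalTuple n (m + 1),
        (α j : ℝ) • (∏ i, y i ^ α i / (α i)!) • G α := sum_comm
    _ = _ := sum_congr rfl fun j _ => ?_
  rw [smul_sum]
  symm
  refine sum_of_injOn (· + Pi.single j 1) (fun γ _ γ' _ h => add_right_cancel h) ?_ ?_ ?_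
  · intro γ hγ
    simp only [mem_coe, Nat.mem_antidiagonalTuple] at hγ ⊢
    rw [sum_add_pi_single_one, hγ]
  · intro α hα hnot
    suffices α j = 0 by simp [this]
    by_contra hj
    have hle : Pi.single j 1 ≤ α := fun i => by
      by_cases h : i = j
      · subst h; simpa using Nat.one_le_iff_ne_zero.mpr hj
      · simp [h]
    refine hnot ⟨α - Pi.single j 1, ?_, tsub_add_cancel_of_le hle⟩
    rw [mem_coe, Nat.mem_antidiagonalTuple]
    rw [Nat.mem_antidiagonalTuple] at hα
    have := sum_add_pi_single_one (α - Pi.single j 1) j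
    rw [tsub_add_cancel_of_le hle, hα] at this
    omega
  · intro γ _
    rw [smul_smul, smul_smul, ← prod_pow_div_factorial_add_single]
    simp

noncomputable def taylorTerm (m : ℕ) (f : (Fin n → ℝ) → E) (x y : Fin n → ℝ) : E :=
  ∑ α ∈ Nat.antidiagonalTuple n m, (∏ i, y i ^ α i / (α i)!) • mpd α f x

noncomputable def taylorRemainder (k : ℕ) (f : (Fin n → ℝ) → E) (x y : Fin n → ℝ) : E :=
  f (x + y) - ∑ m ∈ range (k + 1), taylorTerm m f x y

theorem taylorTerm_zero (f : (Fin n → ℝ) → E) (x y : Fin n → ℝ) : taylorTerm 0 f x y = f x := by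
  simp [taylorTerm, Nat.antidiagonalTuple_zero_right, mpd_zero]

theorem taylorTerm_smul (m : ℕ) (f : (Fin n → ℝ) → E) (x y : Fin n → ℝ) (t : ℝ) :
    taylorTerm m f x (t • y) = t ^ m • taylorTerm m f x y := by
  rw [taylorTerm, taylorTerm, smul_sum]
  refine sum_congr rfl fun α hα => ?_
  rw [Nat.mem_antidiagonalTuple] at hα
  simp only [Pi.smul_apply, smul_eq_mul, mul_pow, mul_div_assoc, prod_mul_distrib,
    prod_pow_eq_pow_sum, hα, smul_smul]

theorem taylorRemainder_zero (k : ℕ) (f : (Fin n → ℝ) → E) (x : Fin n → ℝ) :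
    taylorRemainder k f x 0 = 0 := by
  have hterm (m : ℕ) : taylorTerm (m + 1) f x 0 = 0 := by
    simpa using taylorTerm_smul (m + 1) f x 0 0
  simp [taylorRemainder, sum_range_succ', hterm, taylorTerm_zero]

theorem sum_smul_taylorTerm_pd {m : ℕ} {f : (Fin n → ℝ) → E} (hf : ContDiff ℝ (m + 1 : ℕ) f)
    (x y : Fin n → ℝ) :
    ∑ j, y j • taylorTerm m (pd j f) x y = ((m : ℝ) + 1) • taylorTerm (m + 1) f x y := by
  rw [taylorTerm, ← sum_smul_sum_antidiagonalTuple_add_single (fun α => mpd α f x)]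
  refine sum_congr rfl fun j _ => congrArg _ (sum_congr rfl fun γ hγ => ?_)
  rw [Nat.mem_antidiagonalTuple] at hγ
  rw [mpd_pd j γ (by rwa [hγ])]

theorem fderiv_apply_eq_sum_pd (f : (Fin n → ℝ) → E) (x y : Fin n → ℝ) :
    fderiv ℝ f x y = ∑ j, y j • pd j f x := by
  conv_lhs => rw [← univ_sum_single y]
  refine (map_sum _ _ _).trans (sum_congr rfl fun j _ => ?_)
  rw [show Pi.single j (y j) = y j • Pi.single j (1 : ℝ) by
    rw [← Pi.single_smul, smul_eq_mul, mul_one], map_smul]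
  rfl

theorem hasDerivAt_taylorRemainder_smul {k : ℕ} {f : (Fin n → ℝ) → E}
    (hf : ContDiff ℝ (k + 1 : ℕ) f) (x y : Fin n → ℝ) (t : ℝ) :
    HasDerivAt (fun s : ℝ => taylorRemainder (k + 1) f x (s • y))
      (∑ j, y j • taylorRemainder k (pd j f) x (t • y)) t := by
  have hline : HasDerivAt (fun s : ℝ => f (x + s • y)) (fderiv ℝ f (x + t • y) y) t := by
    refine ((hf.differentiable (by simp)) _).hasFDerivAt.comp_hasDerivAt t ?_
    simpa using ((hasDerivAt_id t).smul_const y).const_add x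
  have hpoly : HasDerivAt
      (fun s : ℝ => ∑ m ∈ range (k + 1), s ^ (m + 1) • taylorTerm (m + 1) f x y + f x)
      (∑ m ∈ range (k + 1), (((m : ℝ) + 1) * t ^ m) • taylorTerm (m + 1) f x y) t := by
    refine (HasDerivAt.fun_sum fun m _ => ?_).add_const _
    simpa using (hasDerivAt_pow (m + 1) t).smul_const (taylorTerm (m + 1) f x y)
  convert hline.sub hpoly using 1
  · funext s
    simp only [taylorRemainder, taylorTerm_smul, sum_range_succ' _ (k + 1), pow_zero, one_smul,
      taylorTerm_zero, Pi.sub_apply]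
  · have hterms (m : ℕ) (hm : m ∈ range (k + 1)) :
        ∑ j, y j • t ^ m • taylorTerm m (pd j f) x y =
          (((m : ℝ) + 1) * t ^ m) • taylorTerm (m + 1) f x y := by
      simp_rw [smul_comm (y _) (t ^ m), ← smul_sum]
      rw [sum_smul_taylorTerm_pd (hf.of_le (by norm_cast; simpa using hm)), smul_smul, mul_comm]
    simp only [taylorRemainder, taylorTerm_smul, smul_sub, sum_sub_distrib, smul_sum,
      fderiv_apply_eq_sum_pd]
    rw [sum_comm, sum_congr rfl hterms]

theorem norm_taylorRemainder_le (k : ℕ) {f : (Fin n → ℝ) → E} (hf : ContDiff ℝ k f) {r M : ℝ}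
    (hM : ∀ α : Fin n → ℕ, ∑ i, α i = k → ∀ z w : Fin n → ℝ, ‖w‖ ≤ r →
      ‖mpd α f (z + w) - mpd α f z‖ ≤ M)
    (x : Fin n → ℝ) {y : Fin n → ℝ} (hy : ‖y‖ ≤ r) :
    ‖taylorRemainder k f x y‖ ≤ n ^ k * M * ‖y‖ ^ k := by
  induction k generalizing f y with
  | zero => simpa [taylorRemainder, taylorTerm_zero, mpd_zero] using hM 0 (by simp) x y hy
  | succ k ih =>
    have hpd (j : Fin n) {w : Fin n → ℝ} (hw : ‖w‖ ≤ r) :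
        ‖taylorRemainder k (pd j f) x w‖ ≤ n ^ k * M * ‖w‖ ^ k := by
      refine ih (contDiff_pd j hf) (fun γ hγ z w' hw' => ?_) hw
      rw [mpd_pd j γ (by rwa [hγ])]
      exact hM _ (by rw [sum_add_pi_single_one, hγ]) z w' hw'
    -- `0 ≤ M` is witnessed at `w = 0`, which needs a coordinate `j`; for `n = 0` nothing is needed.
    have hM_nonneg (j : Fin n) : 0 ≤ M := by
      simpa using hM (Pi.single j (k + 1)) (by simp) x 0 (by simpa using (norm_nonneg y).trans hy)
    have hderiv (t : ℝ) (ht : t ∈ Set.Ico (0 : ℝ) 1) :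
        ‖∑ j, y j • taylorRemainder k (pd j f) x (t • y)‖ ≤ n ^ (k + 1) * M * ‖y‖ ^ (k + 1) := by
      have hty : ‖t • y‖ ≤ ‖y‖ := by
        rw [norm_smul, Real.norm_of_nonneg ht.1]
        exact mul_le_of_le_one_left (norm_nonneg _) ht.2.le
      calc ‖∑ j, y j • taylorRemainder k (pd j f) x (t • y)‖
          ≤ ∑ _j : Fin n, ‖y‖ * (n ^ k * M * ‖y‖ ^ k) := by
            refine (norm_sum_le _ _).trans (sum_le_sum fun j _ => ?_)
            rw [norm_smul]
            have := hM_nonneg j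
            gcongr
            · exact norm_le_pi_norm y j
            · exact (hpd j (hty.trans hy)).trans (by gcongr)
        _ = n ^ (k + 1) * M * ‖y‖ ^ (k + 1) := by simp; ring
    simpa [taylorRemainder_zero] using norm_image_sub_le_of_norm_deriv_le_segment_01'
      (fun t _ => (hasDerivAt_taylorRemainder_smul hf x y t).hasDerivWithinAt) hderiv

theorem sum_range_sum_antidiagonalTuple_eq_sum_fin {M : Type*} [AddCommMonoid M] (k : ℕ)
    (T : (Fin n → ℕ) → M) :
    ∑ m ∈ range (k + 1), ∑ α ∈ Nat.antidiagonalTuple n m, T α =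
      ∑ b : Fin n → Fin (k + 1), if ∑ j, (b j : ℕ) ≤ k then T (fun j => b j) else 0 := by
  rw [← sum_filter, ← sum_fiberwise_of_maps_to
    (g := fun b : Fin n → Fin (k + 1) => ∑ j, (b j : ℕ)) (t := range (k + 1))
    fun b hb => by simpa [Nat.lt_succ_iff] using hb]
  refine sum_congr rfl fun m hm =>
    (sum_nbij (fun (b : Fin n → Fin (k + 1)) j => (b j : ℕ)) ?_ ?_ ?_ fun _ _ => rfl).symm
  · intro b hb
    simpa [Nat.mem_antidiagonalTuple] using (mem_filter.mp hb).2
  · exact fun b _ b' _ h => funext fun j => Fin.ext (congrFun h j)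
  · intro α hα
    rw [mem_coe, Nat.mem_antidiagonalTuple] at hα
    have hle (j : Fin n) : α j < k + 1 := by
      have := single_le_sum (fun i _ => Nat.zero_le (α i)) (mem_univ j)
      simp only [mem_range] at hm
      omega
    exact ⟨fun j => ⟨α j, hle j⟩, by simpa [hα, Nat.lt_succ_iff] using hm, rfl⟩

theorem sum_range_taylorTerm_eq_sum_fin (k : ℕ) (f : (Fin n → ℝ) → ℝ) (x y : Fin n → ℝ) :
    ∑ m ∈ range (k + 1), taylorTerm m f x y =
      ∑ b : Fin n → Fin (k + 1),
        if ∑ j, (b j : ℕ) ≤ k then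
          mpd (fun j => (b j : ℕ)) f x * (∏ j, y j ^ (b j : ℕ)) /
            ((∏ j, (b j : ℕ)! : ℕ) : ℝ)
        else 0 := by
  simp only [taylorTerm, sum_range_sum_antidiagonalTuple_eq_sum_fin, smul_eq_mul, prod_div_distrib,
    Nat.cast_prod]
  refine sum_congr rfl fun b _ => ?_
  split_ifs <;> ring

/-- Taylor remainder estimate in terms of a modulus of continuity. -/
theorem statement7 (n k : ℕ) :
    ∃ c : ℝ, 0 < c ∧
      ∀ δ : ℝ, 0 < δ →
      ∀ ϖ : ℝ → ℝ,
        -- ϖ is a modulus of continuity on (0, δ]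
        (∀ t ∈ Set.Ioc (0 : ℝ) δ, 0 < ϖ t) →
        MonotoneOn ϖ (Set.Ioc 0 δ) →
        ContinuousOn ϖ (Set.Ioc 0 δ) →
        Filter.Tendsto ϖ (nhdsWithin 0 (Set.Ioi 0)) (nhds 0) →
        (∃ Cq : ℝ, ∀ᶠ t in nhdsWithin 0 (Set.Ioi 0), t / ϖ t ≤ Cq) →
      ∀ f : (Fin n → ℝ) → ℝ, ContDiff ℝ k f →
      ∀ L : ℝ, 0 ≤ L →
        (∀ α : Fin n → ℕ, (∑ j, α j) = k →
          ∀ x y : Fin n → ℝ, 0 < ‖x - y‖ → ‖x - y‖ ≤ δ →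
            |mpd α f x - mpd α f y| ≤ L * ϖ ‖x - y‖) →
      ∀ x y : Fin n → ℝ, 0 < ‖y‖ → ‖y‖ ≤ δ →
        |f (x + y) -
            ∑ b : Fin n → Fin (k + 1),
              (if (∑ j, (b j : ℕ)) ≤ k then
                mpd (fun j => (b j : ℕ)) f x * (∏ j, y j ^ (b j : ℕ)) /
                  ((∏ j, Nat.factorial (b j : ℕ) : ℕ) : ℝ)
              else 0)| ≤
          c * L * ϖ ‖y‖ * ‖y‖ ^ k := by
  refine ⟨n ^ k + 1, by positivity, ?_⟩
  intro δ _ ϖ hpos hmono _ _ _ f hf L hL hf_osc x y hy hyδ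
  have hϖy : 0 < ϖ ‖y‖ := hpos _ ⟨hy, hyδ⟩
  have hosc : ∀ α : Fin n → ℕ, ∑ i, α i = k → ∀ z w : Fin n → ℝ, ‖w‖ ≤ ‖y‖ →
      ‖mpd α f (z + w) - mpd α f z‖ ≤ L * ϖ ‖y‖ := by
    intro α hα z w hw
    rcases (norm_nonneg w).eq_or_lt with hw0 | hw0
    · simpa [norm_eq_zero.mp hw0.symm] using mul_nonneg hL hϖy.le
    · calc ‖mpd α f (z + w) - mpd α f z‖ ≤ L * ϖ ‖w‖ := by
            simpa using hf_osc α hα (z + w) z (by simpa using hw0) (by simpa using hw.trans hyδ)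
        _ ≤ L * ϖ ‖y‖ := by gcongr; exact hmono ⟨hw0, hw.trans hyδ⟩ ⟨hy, hyδ⟩ hw
  rw [← sum_range_taylorTerm_eq_sum_fin, ← Real.norm_eq_abs]
  calc ‖taylorRemainder k f x y‖ ≤ n ^ k * (L * ϖ ‖y‖) * ‖y‖ ^ k :=
        norm_taylorRemainder_le k hf hosc x le_rfl
    _ ≤ (n ^ k + 1) * L * ϖ ‖y‖ * ‖y‖ ^ k := by
        have := mul_nonneg (mul_nonneg hL hϖy.le) (pow_nonneg (norm_nonneg y) k)
        nlinarith
end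

section
/- Let 0 < q < 1/3, λ > 1, and Θ = q^{−1/λ}. Let (Q_m)_{m≥1} be a sequence of positive integers such that Q_m ∈ 10ℕ⁺ and Q_{m+1}/Q_m ∈ 10ℕ⁺ for all m, and such that ℓ₁·exp(Θ^m) ≤ Q_m ≤ ℓ₂·exp(Θ^m) for some constants 0 < ℓ₁ ≤ ℓ₂ and all m ≥ 1. Define 𝒫(x) = Σ_{m=1}^∞ q^m sin(π Q_m x) for x ∈ ℝ. Then 𝒫 is well defined (the series converges uniformly), continuous, 1-periodic, and there exist C > 0 and h₀ ∈ (0,1) such that for all x ∈ ℝ and all h with 0 < |h| ≤ h₀: |𝒫(x+h) − 𝒫(x)| ≤ C / (ln(1/|h|))^λ. -/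
/-- The lacunary trigonometric series `𝒫(x) = ∑_{m ≥ 1} q^m sin(π Q_m x)`. -/
noncomputable def lacP (q : ℝ) (Q : ℕ → ℕ) : ℝ → ℝ :=
  fun x => ∑' m : ℕ, q ^ (m + 1) * Real.sin (Real.pi * (Q (m + 1) : ℝ) * x)

/-!
Split the series at the index `M` with `Θ^M ≤ L/2 < Θ^(M+1)`, where `L = log (1/|h|)`.
The first `M` terms are Lipschitz with total constant at most `π l₂ exp (Θ^M)`, so they contribute
at most `π l₂ exp (L/2) |h| = π l₂ exp (-L/2)`, which is `O(L^(-λ))`. The remaining terms contribute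
at most `2 ∑_{m > M} q^m ≤ q^M = (Θ^M)^(-λ) ≤ (2Θ/L)^λ`, because `q = Θ^(-λ)`.
-/

open Filter Finset Real

noncomputable def sineSeries (c ω : ℕ → ℝ) (x : ℝ) : ℝ :=
  ∑' m, c m * sin (ω m * x)

lemma lacP_eq_sineSeries (q : ℝ) (Q : ℕ → ℕ) :
    lacP q Q = sineSeries (fun m => q ^ (m + 1)) (fun m => π * Q (m + 1)) :=
  rfl

namespace sineSeries

variable {c ω : ℕ → ℝ}

lemma norm_term_le (c ω : ℕ → ℝ) (m : ℕ) (x : ℝ) : ‖c m * sin (ω m * x)‖ ≤ |c m| := by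
  rw [norm_mul, norm_eq_abs, norm_eq_abs]
  exact mul_le_of_le_one_right (abs_nonneg _) (abs_sin_le_one _)

lemma tendstoUniformly (hc : Summable c) :
    TendstoUniformly (fun N x => ∑ m ∈ range N, c m * sin (ω m * x)) (sineSeries c ω) atTop :=
  tendstoUniformly_tsum_nat hc.abs (norm_term_le c ω)

lemma continuous (hc : Summable c) : Continuous (sineSeries c ω) :=
  continuous_tsum (fun _ => by fun_prop) hc.abs (norm_term_le c ω)

lemma periodic {T : ℝ} (hω : ∀ m, ∃ k : ℤ, ω m * T = k * (2 * π)) :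
    Function.Periodic (sineSeries c ω) T := by
  intro x
  refine tsum_congr fun m => ?_
  obtain ⟨k, hk⟩ := hω m
  rw [mul_add, hk, sin_add_int_mul_two_pi]

lemma abs_add_sub_le (hc : Summable c) (M : ℕ) (x h : ℝ) :
    |sineSeries c ω (x + h) - sineSeries c ω x| ≤
      (∑ m ∈ range M, |c m| * |ω m|) * |h| + 2 * ∑' m, |c (m + M)| := by
  set f : ℕ → ℝ := fun m => c m * (sin (ω m * (x + h)) - sin (ω m * x))
  have hf_le_two : ∀ m, |f m| ≤ 2 * |c m| := fun m => by
    rw [abs_mul, mul_comm]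
    gcongr
    exact (abs_sub _ _).trans (by
      linarith [abs_sin_le_one (ω m * (x + h)), abs_sin_le_one (ω m * x)])
  have hf_le_lip : ∀ m, |f m| ≤ |c m| * |ω m| * |h| := fun m => by
    rw [abs_mul, mul_assoc, ← abs_mul (ω m)]
    refine mul_le_mul_of_nonneg_left ?_ (abs_nonneg _)
    simpa only [← mul_sub, add_sub_cancel_left] using abs_sin_sub_sin_le (ω m * (x + h)) (ω m * x)
  have hf : Summable f := .of_norm_bounded (hc.abs.mul_left 2) hf_le_two
  have hdiff : sineSeries c ω (x + h) - sineSeries c ω x = ∑' m, f m := by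
    rw [sineSeries, sineSeries, ← Summable.tsum_sub (.of_norm_bounded hc.abs fun m =>
      norm_term_le c ω m _) (.of_norm_bounded hc.abs fun m => norm_term_le c ω m _)]
    simp only [f, mul_sub]
  have hhead : |∑ m ∈ range M, f m| ≤ (∑ m ∈ range M, |c m| * |ω m|) * |h| := by
    rw [sum_mul]
    exact (abs_sum_le_sum_abs _ _).trans (sum_le_sum fun m _ => hf_le_lip m)
  have htail : |∑' m, f (m + M)| ≤ 2 * ∑' m, |c (m + M)| := by
    have hcM : Summable fun m => 2 * |c (m + M)| :=
      ((summable_nat_add_iff M).2 hc.abs).mul_left 2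
    have hfM : Summable fun m => ‖f (m + M)‖ :=
      .of_nonneg_of_le (fun _ => norm_nonneg _) (fun m => hf_le_two (m + M)) hcM
    rw [← tsum_mul_left]
    exact (norm_tsum_le_tsum_norm hfM).trans
      (hfM.tsum_le_tsum (fun m => hf_le_two (m + M)) hcM)
  rw [hdiff, ← hf.sum_add_tsum_nat_add M]
  exact (abs_add_le _ _).trans (add_le_add hhead htail)

end sineSeries

section Geometric

variable {q : ℝ}

lemma summable_pow_succ (hq0 : 0 ≤ q) (hq1 : q < 1) : Summable fun m : ℕ => q ^ (m + 1) :=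
  (summable_nat_add_iff 1).2 (summable_geometric_of_lt_one hq0 hq1)

lemma tsum_pow_add (hq0 : 0 ≤ q) (hq1 : q < 1) (k : ℕ) : ∑' m, q ^ (m + k) = q ^ k / (1 - q) := by
  simp only [pow_add, tsum_mul_right, tsum_geometric_of_lt_one hq0 hq1, div_eq_inv_mul]

lemma sum_range_pow_succ_le_one (hq0 : 0 ≤ q) (hq : q ≤ 1 / 2) (M : ℕ) :
    ∑ m ∈ range M, q ^ (m + 1) ≤ 1 := by
  have hq1 : q < 1 := by linarith
  calc ∑ m ∈ range M, q ^ (m + 1)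
      ≤ ∑' m, q ^ (m + 1) :=
        Summable.sum_le_tsum _ (fun _ _ => by positivity) (summable_pow_succ hq0 hq1)
    _ = q / (1 - q) := by rw [tsum_pow_add hq0 hq1, pow_one]
    _ ≤ 1 := by rw [div_le_one (by linarith)]; linarith

lemma two_mul_tsum_pow_add_succ_le (hq0 : 0 ≤ q) (hq : q ≤ 1 / 3) (M : ℕ) :
    2 * ∑' m, q ^ (m + M + 1) ≤ q ^ M := by
  simp only [add_assoc]
  rw [tsum_pow_add hq0 (by linarith), pow_succ, mul_div_assoc', div_le_iff₀ (by linarith)]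
  nlinarith [pow_nonneg hq0 M]

end Geometric

lemma abs_lacP_add_sub_le {q l₂ Θ : ℝ} {Q : ℕ → ℕ} (hq0 : 0 < q) (hq : q ≤ 1 / 3) (hΘ : 1 ≤ Θ)
    (hl₂ : 0 ≤ l₂) (hQ : ∀ m, 1 ≤ m → (Q m : ℝ) ≤ l₂ * exp (Θ ^ m)) (M : ℕ) (x h : ℝ) :
    |lacP q Q (x + h) - lacP q Q x| ≤ π * l₂ * exp (Θ ^ M) * |h| + q ^ M := by
  have hterm : ∀ m ∈ range M, |q ^ (m + 1)| * |π * (Q (m + 1) : ℝ)| ≤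
      q ^ (m + 1) * (π * l₂ * exp (Θ ^ M)) := fun m hm => by
    rw [abs_of_pos (by positivity), abs_of_nonneg (by positivity), mul_assoc π]
    gcongr
    refine (hQ (m + 1) (by omega)).trans ?_
    gcongr
    simpa using hm
  have hhead : ∑ m ∈ range M, |q ^ (m + 1)| * |π * (Q (m + 1) : ℝ)| ≤ π * l₂ * exp (Θ ^ M) :=
    calc _ ≤ (∑ m ∈ range M, q ^ (m + 1)) * (π * l₂ * exp (Θ ^ M)) := by
          rw [sum_mul]; exact sum_le_sum hterm
      _ ≤ π * l₂ * exp (Θ ^ M) :=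
          mul_le_of_le_one_left (by positivity) (sum_range_pow_succ_le_one hq0.le (by linarith) M)
  have htail : 2 * ∑' m, |q ^ (m + M + 1)| ≤ q ^ M := by
    simpa only [abs_of_pos (pow_pos hq0 _)] using two_mul_tsum_pow_add_succ_le hq0.le hq M
  rw [lacP_eq_sineSeries]
  exact (sineSeries.abs_add_sub_le (summable_pow_succ hq0.le (by linarith)) M x h).trans
    (add_le_add (mul_le_mul_of_nonneg_right hhead (abs_nonneg h)) htail)

lemma exp_neg_half_le_div_rpow (lam : ℝ) {L : ℝ} (hL : 1 ≤ L) :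
    exp (-(L / 2)) ≤ (⌈lam⌉₊).factorial * 2 ^ ⌈lam⌉₊ / L ^ lam := by
  set n := ⌈lam⌉₊
  have hLn : L ^ lam ≤ L ^ n := by
    rw [← rpow_natCast]; exact rpow_le_rpow_of_exponent_le hL (Nat.le_ceil lam)
  have hexp : L ^ n ≤ n.factorial * 2 ^ n * exp (L / 2) := by
    have := pow_div_factorial_le_exp (x := L / 2) (by positivity) n
    rw [div_le_iff₀ (by positivity), div_pow, div_le_iff₀ (by positivity)] at this
    linarith
  rw [le_div_iff₀ (by positivity), exp_neg, inv_mul_le_iff₀ (exp_pos _)]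
  exact hLn.trans (by linarith)

lemma pow_le_div_rpow_of_lt_pow_succ {q lam y : ℝ} (hq0 : 0 < q) (hlam : 0 < lam) (hy : 0 < y)
    {M : ℕ} (hM : y < (q ^ (-(1 / lam))) ^ (M + 1)) :
    q ^ M ≤ (q ^ (-(1 / lam)) / y) ^ lam := by
  set Θ := q ^ (-(1 / lam))
  have hΘ : 0 < Θ := rpow_pos_of_pos hq0 _
  have hqM : q ^ M = (Θ ^ M) ^ (-lam) := by
    rw [← rpow_natCast, ← rpow_natCast, ← rpow_mul hq0.le, ← rpow_mul hq0.le]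
    congr 1; field_simp
  have hyΘ : y / Θ ≤ Θ ^ M := by
    rw [div_le_iff₀ hΘ, ← pow_succ]; exact hM.le
  rw [hqM, ← inv_div, inv_rpow (by positivity), ← rpow_neg (by positivity)]
  exact rpow_le_rpow_of_nonpos (by positivity) hyΘ (by linarith)

theorem lacP_logHolder {q lam l₂ : ℝ} {Q : ℕ → ℕ} (hq0 : 0 < q) (hq : q ≤ 1 / 3) (hlam : 0 < lam)
    (hl₂ : 0 ≤ l₂) (hQ : ∀ m, 1 ≤ m → (Q m : ℝ) ≤ l₂ * exp ((q ^ (-(1 / lam))) ^ m)) :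
    ∃ C h₀ : ℝ, 0 < C ∧ 0 < h₀ ∧ h₀ < 1 ∧ ∀ x h : ℝ, 0 < |h| → |h| ≤ h₀ →
      |lacP q Q (x + h) - lacP q Q x| ≤ C / (log (1 / |h|)) ^ lam := by
  set Θ := q ^ (-(1 / lam))
  have hΘ : 1 < Θ :=
    one_lt_rpow_of_pos_of_lt_one_of_neg hq0 (by linarith) (neg_neg_of_pos (by positivity))
  set n := ⌈lam⌉₊
  refine ⟨π * l₂ * n.factorial * 2 ^ n + (2 * Θ) ^ lam, min (exp (-(2 * Θ))) (1 / 2),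
    by positivity, by positivity, (min_le_right _ _).trans_lt (by norm_num), fun x h hh hh₀ => ?_⟩
  have hLh : exp (-log (1 / |h|)) = |h| := by rw [one_div, log_inv, neg_neg, exp_log hh]
  set L := log (1 / |h|)
  have hL : 2 * Θ ≤ L := by
    have := hLh.trans_le (hh₀.trans (min_le_left _ _))
    linarith [exp_le_exp.1 this]
  obtain ⟨M, hM, hM'⟩ := exists_nat_pow_near (x := L / 2) (by linarith) hΘ
  have hhead : exp (Θ ^ M) * |h| ≤ exp (-(L / 2)) := by
    rw [← hLh, ← exp_add, exp_le_exp]; linarith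
  have htail : q ^ M ≤ (2 * Θ) ^ lam / L ^ lam := by
    rw [← div_rpow (by positivity) (by linarith), show 2 * Θ / L = Θ / (L / 2) by ring]
    exact pow_le_div_rpow_of_lt_pow_succ hq0 hlam (by linarith) hM'
  calc |lacP q Q (x + h) - lacP q Q x|
      ≤ π * l₂ * exp (Θ ^ M) * |h| + q ^ M := abs_lacP_add_sub_le hq0 hq hΘ.le hl₂ hQ M x h
    _ ≤ π * l₂ * (n.factorial * 2 ^ n / L ^ lam) + (2 * Θ) ^ lam / L ^ lam := by
      rw [mul_assoc (π * l₂)]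
      gcongr
      exact hhead.trans (exp_neg_half_le_div_rpow lam (by linarith))
    _ = (π * l₂ * n.factorial * 2 ^ n + (2 * Θ) ^ lam) / L ^ lam := by ring

theorem statement10_general (q lam : ℝ) (hq0 : 0 < q) (hq3 : q < 1 / 3) (hlam : 1 < lam)
    (Q : ℕ → ℕ) (l₁ l₂ : ℝ) (hl₁ : 0 < l₁) (hl₁₂ : l₁ ≤ l₂)
    (hQ10 : ∀ m : ℕ, 1 ≤ m → ∃ a : ℕ, 0 < a ∧ Q m = 10 * a)
    (hQgrow : ∀ m : ℕ, 1 ≤ m →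
      l₁ * Real.exp ((q ^ (-(1 / lam))) ^ m) ≤ (Q m : ℝ) ∧
      (Q m : ℝ) ≤ l₂ * Real.exp ((q ^ (-(1 / lam))) ^ m)) :
    TendstoUniformly
      (fun (N : ℕ) (x : ℝ) =>
        ∑ m ∈ Finset.range N, q ^ (m + 1) * Real.sin (Real.pi * (Q (m + 1) : ℝ) * x))
      (lacP q Q) Filter.atTop ∧
    Continuous (lacP q Q) ∧
    Function.Periodic (lacP q Q) 1 ∧
    ∃ C h₀ : ℝ, 0 < C ∧ 0 < h₀ ∧ h₀ < 1 ∧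
      ∀ x h : ℝ, 0 < |h| → |h| ≤ h₀ →
        |lacP q Q (x + h) - lacP q Q x| ≤ C / (Real.log (1 / |h|)) ^ lam := by
  have hc := summable_pow_succ hq0.le (by linarith)
  have hfreq : ∀ m, ∃ k : ℤ, π * (Q (m + 1) : ℝ) * 1 = k * (2 * π) := fun m => by
    obtain ⟨a, -, ha⟩ := hQ10 (m + 1) m.succ_pos
    exact ⟨5 * a, by rw [ha]; push_cast; ring⟩
  rw [lacP_eq_sineSeries]
  exact ⟨sineSeries.tendstoUniformly hc, sineSeries.continuous hc, sineSeries.periodic hfreq,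
    lacP_logHolder hq0 hq3.le (by linarith) (hl₁.le.trans hl₁₂) fun m hm => (hQgrow m hm).2⟩

/-- `𝒫` is well defined (uniform convergence), continuous, 1-periodic,
and logarithmically Hölder continuous with exponent `λ`. -/
theorem statement10 (q lam : ℝ) (hq0 : 0 < q) (hq3 : q < 1 / 3) (hlam : 1 < lam)
    (Q : ℕ → ℕ) (l₁ l₂ : ℝ) (hl₁ : 0 < l₁) (hl₁₂ : l₁ ≤ l₂)
    (hQ10 : ∀ m : ℕ, 1 ≤ m → ∃ a : ℕ, 0 < a ∧ Q m = 10 * a)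
    (hQrat : ∀ m : ℕ, 1 ≤ m → ∃ a : ℕ, 0 < a ∧ Q (m + 1) = (10 * a) * Q m)
    (hQgrow : ∀ m : ℕ, 1 ≤ m →
      l₁ * Real.exp ((q ^ (-(1 / lam))) ^ m) ≤ (Q m : ℝ) ∧
      (Q m : ℝ) ≤ l₂ * Real.exp ((q ^ (-(1 / lam))) ^ m)) :
    TendstoUniformly
      (fun (N : ℕ) (x : ℝ) =>
        ∑ m ∈ Finset.range N, q ^ (m + 1) * Real.sin (Real.pi * (Q (m + 1) : ℝ) * x))
      (lacP q Q) Filter.atTop ∧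
    Continuous (lacP q Q) ∧
    Function.Periodic (lacP q Q) 1 ∧
    ∃ C h₀ : ℝ, 0 < C ∧ 0 < h₀ ∧ h₀ < 1 ∧
      ∀ x h : ℝ, 0 < |h| → |h| ≤ h₀ →
        |lacP q Q (x + h) - lacP q Q x| ≤ C / (Real.log (1 / |h|)) ^ lam :=
  statement10_general q lam hq0 hq3 hlam Q l₁ l₂ hl₁ hl₁₂ hQ10 hQgrow
end

section
/- Let 0 < q < 1/3, λ > 1, and Θ = q^{−1/λ}. Let (Q_m)_{m≥1} be a sequence of positive integers such that Q_m ∈ 10ℕ⁺ and Q_{m+1}/Q_m ∈ 10ℕ⁺ for all m, and such that ℓ₁·exp(Θ^m) ≤ Q_m ≤ ℓ₂·exp(Θ^m) for some constants 0 < ℓ₁ ≤ ℓ₂ and all m ≥ 1. Define 𝒫(x) = Σ_{m=1}^∞ q^m sin(π Q_m x) for x ∈ ℝ. Then 𝒫 is nowhere Hölder continuous: for every x ∈ ℝ, every α ∈ (0,1], every M > 0, and every δ > 0, there exists h with 0 < |h| ≤ δ such that |𝒫(x+h) − 𝒫(x)| ≥ M·|h|^α. -/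
open Real Filter Finset Topology

theorem tendsto_mul_pow_add_mul_atTop {θ c : ℝ} (hθ : 1 < θ) (hc : 0 < c) (b : ℝ) :
    Tendsto (fun n : ℕ => c * θ ^ n + b * n) atTop atTop := by
  have hratio : Tendsto (fun n : ℕ => c + b * ((n : ℝ) ^ 1 / θ ^ n)) atTop (𝓝 c) := by
    simpa using (tendsto_pow_const_div_const_pow_of_one_lt 1 hθ).const_mul b |>.const_add c
  refine ((tendsto_pow_atTop_atTop_of_one_lt hθ).atTop_mul_pos hc hratio).congr fun n => ?_
  have : θ ^ n ≠ 0 := (pow_pos (by linarith) n).ne'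
  field_simp

section Growth

variable {q θ l₁ : ℝ} {Q : ℕ → ℕ}

theorem tendsto_natCast_atTop_of_exp_pow_le (hθ : 1 < θ) (hl₁ : 0 < l₁)
    (hlow : ∀ᶠ m in atTop, l₁ * exp (θ ^ m) ≤ Q m) :
    Tendsto (fun m => (Q m : ℝ)) atTop atTop :=
  tendsto_atTop_mono' _ hlow <|
    (tendsto_exp_atTop.comp (tendsto_pow_atTop_atTop_of_one_lt hθ)).const_mul_atTop hl₁

theorem tendsto_pow_mul_rpow_atTop_of_exp_pow_le (hθ : 1 < θ) (hl₁ : 0 < l₁) (hq : 0 < q)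
    {a : ℝ} (ha : 0 < a) (hlow : ∀ᶠ m in atTop, l₁ * exp (θ ^ m) ≤ Q m) :
    Tendsto (fun m => q ^ m * (Q m : ℝ) ^ a) atTop atTop := by
  have hexp := (tendsto_exp_atTop.comp
    (tendsto_mul_pow_add_mul_atTop hθ ha (log q))).const_mul_atTop (rpow_pos_of_pos hl₁ a)
  refine tendsto_atTop_mono' _ ?_ hexp
  filter_upwards [hlow] with m hm
  calc l₁ ^ a * exp (a * θ ^ m + log q * m)
      = q ^ m * (l₁ * exp (θ ^ m)) ^ a := by
        rw [mul_rpow hl₁.le (exp_pos _).le, ← exp_mul, exp_add, mul_comm (log q), exp_nat_mul,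
          exp_log hq, mul_comm (θ ^ m)]
        ring
    _ ≤ q ^ m * (Q m : ℝ) ^ a := by gcongr

theorem eventually_mul_le_pow_succ_mul_of_exp_pow_le {l₂ C : ℝ} (hθ : 1 < θ) (hl₁ : 0 < l₁)
    (hq : 0 < q) (hC : 0 ≤ C) (hlow : ∀ᶠ m in atTop, l₁ * exp (θ ^ m) ≤ Q m)
    (hup : ∀ᶠ m in atTop, (Q m : ℝ) ≤ l₂ * exp (θ ^ m)) :
    ∀ᶠ n in atTop, C * (n * Q n) ≤ q ^ (n + 1) * Q (n + 1) := by
  have hexp := (tendsto_exp_atTop.comp <| tendsto_atTop_add_const_right _ (log q) <|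
    tendsto_mul_pow_add_mul_atTop hθ (sub_pos.2 hθ) (log q - 1)).const_mul_atTop hl₁
  filter_upwards [hexp.eventually_ge_atTop (C * l₂), hup,
    (tendsto_add_atTop_nat 1).eventually hlow] with n hn hQn hQn1
  have hn_le : (n : ℝ) ≤ exp n := by linarith [add_one_le_exp (n : ℝ)]
  have hq_pow : q ^ (n + 1) = exp ((n + 1 : ℕ) * log q) := by rw [exp_nat_mul, exp_log hq]
  calc C * (n * Q n) ≤ C * (exp n * (l₂ * exp (θ ^ n))) := by gcongr
    _ = C * l₂ * exp (n + θ ^ n) := by rw [exp_add]; ring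
    _ ≤ l₁ * exp ((θ - 1) * θ ^ n + (log q - 1) * n + log q) * exp (n + θ ^ n) := by
        gcongr ?_ * _; exact hn
    _ = q ^ (n + 1) * (l₁ * exp (θ ^ (n + 1))) := by
        rw [hq_pow, mul_assoc, ← exp_add, mul_left_comm, ← exp_add]
        congr 2
        push_cast
        ring
    _ ≤ q ^ (n + 1) * Q (n + 1) := by gcongr

end Growth

section Divisibility

variable {Q : ℕ → ℕ}

theorem two_pow_mul_dvd (hdvd : ∀ m, 1 ≤ m → 2 * Q m ∣ Q (m + 1)) {m : ℕ} (hm : 1 ≤ m) :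
    ∀ k, 2 ^ k * Q m ∣ Q (m + k)
  | 0 => by simp
  | k + 1 => by
    rw [pow_succ', mul_assoc, ← add_assoc]
    exact (Nat.mul_dvd_mul_left 2 (two_pow_mul_dvd hdvd hm k)).trans (hdvd _ (by omega))

theorem le_of_two_mul_dvd (hdvd : ∀ m, 1 ≤ m → 2 * Q m ∣ Q (m + 1))
    (hpos : ∀ m, 1 ≤ m → 0 < Q m) {m m' : ℕ} (hm : 1 ≤ m) (hmm' : m ≤ m') : Q m ≤ Q m' := by
  obtain ⟨k, rfl⟩ := Nat.exists_eq_add_of_le hmm'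
  calc Q m ≤ 2 ^ k * Q m := Nat.le_mul_of_pos_left _ (by positivity)
    _ ≤ Q (m + k) := Nat.le_of_dvd (hpos _ (by omega)) (two_pow_mul_dvd hdvd hm k)

end Divisibility

theorem sin_pi_mul_add_inv_of_two_mul_dvd {d k : ℕ} (hd : d ≠ 0) (h : 2 * d ∣ k) (x : ℝ) :
    sin (π * k * (x + 1 / d)) = sin (π * k * x) := by
  obtain ⟨t, rfl⟩ := h
  have hd' : (d : ℝ) ≠ 0 := by exact_mod_cast hd
  convert sin_add_nat_mul_two_pi (π * (2 * d * t : ℕ) * x) t using 2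
  push_cast
  field_simp

theorem abs_sin_add_pi_div_two_sub_sin_ge {y : ℝ} (hy : |sin y| < 1 / 4) :
    43 / 60 ≤ |sin (y + π / 2) - sin y| := by
  rw [sin_add_pi_div_two]
  have hcos : 29 / 30 ≤ |cos y| := by
    nlinarith [sin_sq_add_cos_sq y, sq_abs (cos y), sq_abs (sin y), abs_nonneg (cos y),
      abs_nonneg (sin y)]
  linarith [abs_sub_abs_le_abs_sub (cos y) (sin y)]

noncomputable def lacIncr (q : ℝ) (Q : ℕ → ℕ) (x r : ℝ) (m : ℕ) : ℝ :=
  q ^ m * (sin (π * Q m * (x + r)) - sin (π * Q m * x))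

section Increments

variable {q : ℝ} {Q : ℕ → ℕ} {x r : ℝ}

theorem summable_lacP_terms (hq : |q| < 1) (y : ℝ) :
    Summable fun m : ℕ => q ^ (m + 1) * sin (π * Q (m + 1) * y) := by
  refine .of_norm_bounded ((summable_geometric_of_lt_one (abs_nonneg q) hq).mul_left |q|)
    fun m => ?_
  rw [norm_mul, norm_pow, Real.norm_eq_abs, pow_succ', Real.norm_eq_abs]
  exact mul_le_of_le_one_right (by positivity) (abs_sin_le_one _)

theorem lacP_add_sub_eq_sum (hq : |q| < 1) {K : ℕ}
    (htail : ∀ m, K < m → lacIncr q Q x r m = 0) :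
    lacP q Q (x + r) - lacP q Q x = ∑ i ∈ range K, lacIncr q Q x r (i + 1) := by
  rw [lacP, lacP, ← (summable_lacP_terms hq _).tsum_sub (summable_lacP_terms hq _)]
  simp_rw [← mul_sub]
  exact tsum_eq_sum fun i hi => htail _ (by simpa using hi)

theorem abs_lacIncr_le (hq0 : 0 ≤ q) (hq1 : q ≤ 1) (hr : 0 ≤ r) (m : ℕ) :
    |lacIncr q Q x r m| ≤ π * Q m * r := by
  rw [lacIncr, abs_mul, abs_of_nonneg (pow_nonneg hq0 m)]
  calc q ^ m * |sin (π * Q m * (x + r)) - sin (π * Q m * x)| ≤ 1 * |π * Q m * r| :=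
        mul_le_mul (pow_le_one₀ hq0 hq1) ((abs_sin_sub_sin_le _ _).trans_eq (by ring_nf))
          (abs_nonneg _) zero_le_one
    _ = π * Q m * r := by rw [one_mul, abs_of_nonneg (by positivity)]

theorem abs_lacIncr_le_two_mul (hq0 : 0 ≤ q) (m : ℕ) : |lacIncr q Q x r m| ≤ 2 * q ^ m := by
  rw [lacIncr, abs_mul, abs_of_nonneg (pow_nonneg hq0 m), mul_comm 2]
  gcongr
  have h₁ := abs_sin_le_one (π * Q m * (x + r))
  have h₂ := abs_sin_le_one (π * Q m * x)
  linarith [abs_sub (sin (π * Q m * (x + r))) (sin (π * Q m * x))]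

theorem abs_sum_lacIncr_le (hq0 : 0 ≤ q) (hq1 : q ≤ 1) (hr : 0 ≤ r) {n : ℕ}
    (hmono : ∀ i < n, Q (i + 1) ≤ Q n) :
    |∑ i ∈ range n, lacIncr q Q x r (i + 1)| ≤ n * (π * Q n * r) := by
  calc |∑ i ∈ range n, lacIncr q Q x r (i + 1)|
      ≤ ∑ i ∈ range n, |lacIncr q Q x r (i + 1)| := abs_sum_le_sum_abs _ _
    _ ≤ ∑ _i ∈ range n, π * Q n * r := by
        refine sum_le_sum fun i hi => (abs_lacIncr_le hq0 hq1 hr _).trans ?_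
        gcongr
        exact_mod_cast hmono i (mem_range.1 hi)
    _ = n * (π * Q n * r) := by rw [sum_const, card_range, nsmul_eq_mul]

theorem lacIncr_eq_zero_of_lt (hdvd : ∀ m, 1 ≤ m → 2 * Q m ∣ Q (m + 1)) {N : ℕ} (hN : 1 ≤ N)
    (hQN : 0 < Q N) {j m : ℕ} (hm : N + j < m) :
    lacIncr q Q x (1 / (2 ^ j * Q N)) m = 0 := by
  have hdvd_m : 2 * (2 ^ j * Q N) ∣ Q m := by
    obtain ⟨k, rfl⟩ := Nat.exists_eq_add_of_lt hm
    rw [← mul_assoc, ← pow_succ', show N + j + k + 1 = N + (j + 1 + k) by omega]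
    exact (Nat.mul_dvd_mul_right (pow_dvd_pow 2 (by omega)) _).trans
      (two_pow_mul_dvd hdvd hN _)
  have h := sin_pi_mul_add_inv_of_two_mul_dvd (by positivity) hdvd_m x
  push_cast at h
  rw [lacIncr, h, sub_self, mul_zero]

theorem exists_abs_lacIncr_add_lacIncr_ge (hq0 : 0 < q) (hq3 : q < 1 / 3)
    (hdvd : ∀ m, 1 ≤ m → 2 * Q m ∣ Q (m + 1)) {N : ℕ} (hN : 1 ≤ N) (hQN : 0 < Q N) (x : ℝ) :
    ∃ r : ℝ, 0 < r ∧ r ≤ 1 / Q N ∧ (∀ m, N + 1 < m → lacIncr q Q x r m = 0) ∧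
      q ^ N / 20 ≤ |lacIncr q Q x r N + lacIncr q Q x r (N + 1)| := by
  have hQN' : (0 : ℝ) < Q N := by exact_mod_cast hQN
  have hqN : 0 < q ^ N := pow_pos hq0 N
  set y := π * Q N * x with hy
  by_cases hsin : 1 / 4 ≤ |sin y|
  · have htail : ∀ m, N < m → lacIncr q Q x (1 / Q N) m = 0 := fun m hm => by
      simpa using lacIncr_eq_zero_of_lt (x := x) (q := q) hdvd hN hQN (j := 0)
        (by simpa using hm)
    refine ⟨1 / (Q N : ℝ), by positivity, le_rfl, fun m hm => htail m (by omega), ?_⟩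
    have hmain : lacIncr q Q x (1 / Q N) N = -(2 * q ^ N * sin y) := by
      rw [lacIncr, show π * Q N * (x + 1 / Q N) = y + π by rw [hy]; field_simp, sin_add_pi]
      ring
    rw [htail (N + 1) (by omega), add_zero, hmain, abs_neg, abs_mul,
      abs_of_pos (by positivity : (0 : ℝ) < 2 * q ^ N)]
    nlinarith
  · have htail : ∀ m, N + 1 < m → lacIncr q Q x (1 / (2 * Q N)) m = 0 := fun m hm => by
      simpa using lacIncr_eq_zero_of_lt (x := x) (q := q) hdvd hN hQN (j := 1) hm
    refine ⟨1 / (2 * (Q N : ℝ)), by positivity, by gcongr; linarith, htail, ?_⟩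
    have hmain : 43 / 60 * q ^ N ≤ |lacIncr q Q x (1 / (2 * Q N)) N| := by
      rw [lacIncr, show π * Q N * (x + 1 / (2 * Q N)) = y + π / 2 by rw [hy]; field_simp,
        abs_mul, abs_of_pos hqN, mul_comm]
      gcongr
      exact abs_sin_add_pi_div_two_sub_sin_ge (not_le.1 hsin)
    have hnext := abs_lacIncr_le_two_mul (x := x) (r := 1 / (2 * Q N)) (Q := Q) hq0.le (N + 1)
    have hsub := abs_sub_abs_le_abs_add (lacIncr q Q x (1 / (2 * Q N)) N)
      (lacIncr q Q x (1 / (2 * Q N)) (N + 1))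
    rw [pow_succ] at hnext
    -- `43/60 - 2q ≥ 1/20` exactly when `q ≤ 1/3`
    nlinarith

theorem exists_abs_lacP_add_sub_ge (hq0 : 0 < q) (hq3 : q < 1 / 3)
    (hdvd : ∀ m, 1 ≤ m → 2 * Q m ∣ Q (m + 1)) (hpos : ∀ m, 1 ≤ m → 0 < Q m) (x : ℝ) (n : ℕ) :
    ∃ r : ℝ, 0 < r ∧ r ≤ 1 / Q (n + 1) ∧
      q ^ (n + 1) / 20 - n * (π * Q n * r) ≤ |lacP q Q (x + r) - lacP q Q x| := by
  obtain ⟨r, hr0, hrQ, htail, hmain⟩ :=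
    exists_abs_lacIncr_add_lacIncr_ge hq0 hq3 hdvd (N := n + 1) (by omega) (hpos _ (by omega)) x
  refine ⟨r, hr0, hrQ, ?_⟩
  have hhead := abs_sum_lacIncr_le (x := x) hq0.le (by linarith) hr0.le (n := n)
    fun i hi => le_of_two_mul_dvd hdvd hpos (by omega) (by omega)
  rw [lacP_add_sub_eq_sum (abs_lt.2 ⟨by linarith, by linarith⟩) htail, sum_range_succ,
    sum_range_succ, add_assoc]
  have hjump := abs_sub_abs_le_abs_add (lacIncr q Q x r (n + 1) + lacIncr q Q x r (n + 1 + 1))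
    (∑ i ∈ range n, lacIncr q Q x r (i + 1))
  rw [add_comm _ (∑ i ∈ range n, _)] at hjump
  linarith

theorem exists_abs_lacP_add_sub_ge_mul_rpow (hq0 : 0 < q) (hq3 : q < 1 / 3)
    (hdvd : ∀ m, 1 ≤ m → 2 * Q m ∣ Q (m + 1)) (hpos : ∀ m, 1 ≤ m → 0 < Q m) (x : ℝ)
    {a M δ : ℝ} (ha : 0 < a) (hM : 0 ≤ M) (hδ : 0 < δ) {n : ℕ} (hQδ : 1 / δ ≤ Q (n + 1))
    (hhead : 40 * π * (n * Q n) ≤ q ^ (n + 1) * Q (n + 1))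
    (hQa : 40 * M ≤ q ^ (n + 1) * (Q (n + 1) : ℝ) ^ a) :
    ∃ h : ℝ, 0 < |h| ∧ |h| ≤ δ ∧ M * |h| ^ a ≤ |lacP q Q (x + h) - lacP q Q x| := by
  obtain ⟨r, hr0, hrQ, hjump⟩ := exists_abs_lacP_add_sub_ge hq0 hq3 hdvd hpos x n
  have hQ : (0 : ℝ) < Q (n + 1) := by exact_mod_cast hpos _ (by omega)
  refine ⟨r, by positivity, ?_, ?_⟩
  · rw [abs_of_pos hr0]
    exact hrQ.trans ((one_div_le hQ hδ).2 hQδ)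
  have hMr : M * |r| ^ a ≤ q ^ (n + 1) / 40 := by
    calc M * |r| ^ a ≤ M * (1 / Q (n + 1) : ℝ) ^ a := by
          rw [abs_of_pos hr0]; gcongr
      _ = M / (Q (n + 1) : ℝ) ^ a := by rw [div_rpow zero_le_one hQ.le, one_rpow, mul_one_div]
      _ ≤ q ^ (n + 1) / 40 := by
          rw [div_le_div_iff₀ (rpow_pos_of_pos hQ a) (by norm_num)]
          linarith
  have hhead' : n * (π * Q n * r) ≤ q ^ (n + 1) / 40 := by
    calc n * (π * Q n * r) ≤ n * (π * Q n * (1 / Q (n + 1))) := by gcongr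
      _ ≤ q ^ (n + 1) / 40 := by
          rw [mul_one_div, ← mul_div_assoc, div_le_div_iff₀ hQ (by norm_num)]
          linarith
  linarith

end Increments

theorem statement11_general (q lam : ℝ) (hq0 : 0 < q) (hq3 : q < 1 / 3) (hlam : 1 < lam)
    (Q : ℕ → ℕ) (l₁ l₂ : ℝ) (hl₁ : 0 < l₁)
    (hQrat : ∀ m : ℕ, 1 ≤ m → ∃ a : ℕ, 0 < a ∧ Q (m + 1) = (10 * a) * Q m)
    (hQgrow : ∀ m : ℕ, 1 ≤ m →
      l₁ * Real.exp ((q ^ (-(1 / lam))) ^ m) ≤ (Q m : ℝ) ∧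
      (Q m : ℝ) ≤ l₂ * Real.exp ((q ^ (-(1 / lam))) ^ m)) :
    ∀ x a M δ : ℝ, 0 < a → a ≤ 1 → 0 < M → 0 < δ →
      ∃ h : ℝ, 0 < |h| ∧ |h| ≤ δ ∧
        M * |h| ^ a ≤ |lacP q Q (x + h) - lacP q Q x| := by
  intro x a M δ ha _ hM hδ
  have hθ : 1 < q ^ (-(1 / lam)) :=
    one_lt_rpow_of_pos_of_lt_one_of_neg hq0 (by linarith) (neg_neg_of_pos (by positivity))
  have hlow := eventually_atTop.2 ⟨1, fun m hm => (hQgrow m hm).1⟩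
  have hup := eventually_atTop.2 ⟨1, fun m hm => (hQgrow m hm).2⟩
  have hpos : ∀ m, 1 ≤ m → 0 < Q m := fun m hm => by
    exact_mod_cast (mul_pos hl₁ (exp_pos _)).trans_le (hQgrow m hm).1
  have hdvd : ∀ m, 1 ≤ m → 2 * Q m ∣ Q (m + 1) := fun m hm => by
    obtain ⟨b, -, hb⟩ := hQrat m hm
    exact ⟨5 * b, by rw [hb]; ring⟩
  have hQδ := ((tendsto_natCast_atTop_of_exp_pow_le hθ hl₁ hlow).comp
    (tendsto_add_atTop_nat 1)).eventually_ge_atTop (1 / δ)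
  have hhead := eventually_mul_le_pow_succ_mul_of_exp_pow_le hθ hl₁ hq0
    (C := 40 * π) (by positivity) hlow hup
  have hQa := ((tendsto_pow_mul_rpow_atTop_of_exp_pow_le hθ hl₁ hq0 ha hlow).comp
    (tendsto_add_atTop_nat 1)).eventually_ge_atTop (40 * M)
  obtain ⟨n, hQδn, hheadn, hQan⟩ := (hQδ.and (hhead.and hQa)).exists
  exact exists_abs_lacP_add_sub_ge_mul_rpow hq0 hq3 hdvd hpos x ha hM.le hδ hQδn
    hheadn hQan

/-- `𝒫` is nowhere Hölder continuous. -/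
theorem statement11 (q lam : ℝ) (hq0 : 0 < q) (hq3 : q < 1 / 3) (hlam : 1 < lam)
    (Q : ℕ → ℕ) (l₁ l₂ : ℝ) (hl₁ : 0 < l₁) (hl₁₂ : l₁ ≤ l₂)
    (hQ10 : ∀ m : ℕ, 1 ≤ m → ∃ a : ℕ, 0 < a ∧ Q m = 10 * a)
    (hQrat : ∀ m : ℕ, 1 ≤ m → ∃ a : ℕ, 0 < a ∧ Q (m + 1) = (10 * a) * Q m)
    (hQgrow : ∀ m : ℕ, 1 ≤ m →
      l₁ * Real.exp ((q ^ (-(1 / lam))) ^ m) ≤ (Q m : ℝ) ∧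
      (Q m : ℝ) ≤ l₂ * Real.exp ((q ^ (-(1 / lam))) ^ m)) :
    ∀ x a M δ : ℝ, 0 < a → a ≤ 1 → 0 < M → 0 < δ →
      ∃ h : ℝ, 0 < |h| ∧ |h| ≤ δ ∧
        M * |h| ^ a ≤ |lacP q Q (x + h) - lacP q Q x| :=
  statement11_general q lam hq0 hq3 hlam Q l₁ l₂ hl₁ hQrat hQgrow
end
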